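/- arXiv:2003.08292 — 6 statements merged into one kernel-verified Lean document; each statement's English description precedes it below -/
import Mathlib

section
/- Let $X$ and $Y$ be two non-negative random variables such that for every $x>0$, $x\,\mathbb{P}(X>x) \le \mathbb{E}[Y\,\mathbf 1\{X\ge x\}]$. Then for every $t>0$, $\mathbb{P}(X>2t) \le \int_1^{\infty} \mathbb{P}(Y>st)\,\mathrm ds$. -/
/-!
With `Z = (Y - t)⁺` we have `Y ≤ t + Z`, so for `x > 2t` the hypothesis gives
`x P(X > x) ≤ t P(X ≥ x) + E Z ≤ t P(X > 2t) + E Z`; letting `x ↓ 2t` yields `t P(X > 2t) ≤ E Z`.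
By the layer-cake formula, `E Z = ∫_t^∞ P(Y > y) dy = t ∫_1^∞ P(Y > s t) ds`.
-/

open MeasureTheory Filter Topology Set

section

variable {Ω : Type*} [MeasurableSpace Ω] {μ : Measure Ω}

theorem tendsto_measure_setOf_lt_nhdsGT (X : Ω → ℝ) (a : ℝ) :
    Tendsto (fun x => μ {ω | x < X ω}) (𝓝[>] a) (𝓝 (μ {ω | a < X ω})) := by
  have hunion : ⋃ x : Ioi a, {ω | (x : ℝ) < X ω} = {ω | a < X ω} := by
    ext ω
    simp only [mem_iUnion, mem_ofPred_eq, Subtype.exists, mem_Ioi, exists_prop]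
    exact ⟨fun ⟨x, hax, hx⟩ => hax.trans hx, fun h => exists_between h⟩
  have hanti : Antitone fun x : Ioi a => {ω | (x : ℝ) < X ω} :=
    fun _ _ hxy _ hω => lt_of_le_of_lt (α := ℝ) hxy hω
  rw [← hunion, ← map_coe_Ioi_atBot a]
  exact tendsto_map'_iff.mpr (tendsto_measure_iUnion_atBot hanti)

theorem integral_Ioi_measureReal_lt_eq_integral_max_sub [IsFiniteMeasure μ] {Y : Ω → ℝ}
    (hY : Integrable Y μ) (t : ℝ) :
    ∫ y in Ioi t, μ.real {ω | y < Y ω} = ∫ ω, max (Y ω - t) 0 ∂μ := by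
  have hshift : ∫ u in Ioi (0 : ℝ), μ.real {ω | u + t < Y ω} =
      ∫ y in Ioi t, μ.real {ω | y < Y ω} := by
    have hpre : (· + t) ⁻¹' Ioi t = Ioi (0 : ℝ) := by ext u; simp
    rw [← hpre]
    exact (measurePreserving_add_right volume t).setIntegral_preimage_emb
      (Homeomorph.addRight t).measurableEmbedding (fun y => μ.real {ω | y < Y ω}) _
  have hZ : Integrable (fun ω => max (Y ω - t) 0) μ := (hY.sub (integrable_const t)).pos_part
  rw [hZ.integral_eq_integral_meas_lt (.of_forall fun _ => le_max_right _ _), ← hshift]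
  refine setIntegral_congr_fun measurableSet_Ioi fun u (hu : 0 < u) => ?_
  congr 1
  ext ω
  simp only [mem_ofPred_eq, lt_max_iff, lt_sub_iff_add_lt, hu.not_gt, or_false]

theorem setIntegral_le_mul_measureReal_add_integral_max_sub [IsFiniteMeasure μ] {Y : Ω → ℝ}
    (hY : Integrable Y μ) (s : Set Ω) (t : ℝ) :
    ∫ ω in s, Y ω ∂μ ≤ t * μ.real s + ∫ ω, max (Y ω - t) 0 ∂μ := by
  have hZ : Integrable (fun ω => max (Y ω - t) 0) μ := (hY.sub (integrable_const t)).pos_part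
  calc ∫ ω in s, Y ω ∂μ ≤ ∫ ω in s, (t + max (Y ω - t) 0) ∂μ :=
        setIntegral_mono hY.integrableOn ((integrable_const t).add hZ).integrableOn
          fun ω => by linarith [le_max_left (Y ω - t) 0]
    _ = t * μ.real s + ∫ ω in s, max (Y ω - t) 0 ∂μ := by
        rw [integral_add (integrable_const t).integrableOn hZ.integrableOn, setIntegral_const,
          smul_eq_mul, mul_comm]
    _ ≤ t * μ.real s + ∫ ω, max (Y ω - t) 0 ∂μ := by
        grw [setIntegral_le_integral hZ (.of_forall fun _ => le_max_right _ _)]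

theorem sub_mul_measureReal_lt_le_integral_max_sub [IsFiniteMeasure μ] {X Y : Ω → ℝ}
    (hY : Integrable Y μ) {a t : ℝ} (ht : 0 ≤ t)
    (hyp : ∀ x, a < x → x * μ.real {ω | x < X ω} ≤ ∫ ω in {ω | x ≤ X ω}, Y ω ∂μ) :
    (a - t) * μ.real {ω | a < X ω} ≤ ∫ ω, max (Y ω - t) 0 ∂μ := by
  have hbound : ∀ x, a < x →
      x * μ.real {ω | x < X ω} ≤ t * μ.real {ω | a < X ω} + ∫ ω, max (Y ω - t) 0 ∂μ := by
    intro x hx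
    have hsub : {ω | x ≤ X ω} ⊆ {ω | a < X ω} := fun ω hω => hx.trans_le hω
    grw [hyp x hx, setIntegral_le_mul_measureReal_add_integral_max_sub hY _ t,
      measureReal_mono hsub]
  have hlim : Tendsto (fun x => x * μ.real {ω | x < X ω}) (𝓝[>] a)
      (𝓝 (a * μ.real {ω | a < X ω})) :=
    tendsto_nhdsWithin_of_tendsto_nhds tendsto_id |>.mul <|
      (ENNReal.tendsto_toReal (measure_ne_top μ _)).comp (tendsto_measure_setOf_lt_nhdsGT X a)
  have hlimit := le_of_tendsto hlim (eventually_nhdsWithin_of_forall hbound)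
  linarith

end

theorem stmt2_general {Ω : Type*} [MeasurableSpace Ω] (μ : Measure Ω) [IsProbabilityMeasure μ]
    (X Y : Ω → ℝ) (hYint : Integrable Y μ)
    (hyp : ∀ x : ℝ, 0 < x →
      x * (μ {ω | x < X ω}).toReal ≤ ∫ ω in {ω | x ≤ X ω}, Y ω ∂μ) :
    ∀ t : ℝ, 0 < t →
      (μ {ω | 2 * t < X ω}).toReal ≤ ∫ s in Set.Ioi (1 : ℝ), (μ {ω | s * t < Y ω}).toReal := by
  intro t ht
  have hrescale : ∫ s in Ioi (1 : ℝ), μ.real {ω | s * t < Y ω} =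
      t⁻¹ * ∫ y in Ioi t, μ.real {ω | y < Y ω} := by
    simpa using integral_comp_mul_right_Ioi (fun y => μ.real {ω | y < Y ω}) 1 ht
  have hmain := sub_mul_measureReal_lt_le_integral_max_sub (a := 2 * t) hYint ht.le
    fun x hx => hyp x (by linarith)
  simp only [← measureReal_def]
  rw [hrescale, integral_Ioi_measureReal_lt_eq_integral_max_sub hYint,
    inv_mul_eq_div, le_div_iff₀ ht]
  linarith

theorem stmt2 {Ω : Type*} [MeasurableSpace Ω] (μ : Measure Ω) [IsProbabilityMeasure μ]
    (X Y : Ω → ℝ) (hXm : Measurable X) (hYm : Measurable Y)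
    (hX0 : ∀ ω, 0 ≤ X ω) (hY0 : ∀ ω, 0 ≤ Y ω) (hYint : Integrable Y μ)
    (hyp : ∀ x : ℝ, 0 < x →
      x * (μ {ω | x < X ω}).toReal ≤ ∫ ω in {ω | x ≤ X ω}, Y ω ∂μ) :
    ∀ t : ℝ, 0 < t →
      (μ {ω | 2 * t < X ω}).toReal ≤ ∫ s in Set.Ioi (1 : ℝ), (μ {ω | s * t < Y ω}).toReal :=
  stmt2_general μ X Y hYint hyp
end

section
/- Let $p\ge 1$ and $q\ge 0$. There exists a constant $c_{p,q}$ depending only on $p$ and $q$ such that for every non-negative random variable $X$, $\sum_{k=1}^{\infty} 2^{kp} k^q\, \mathbb{P}\{X > 2^k/\sqrt{k}\} \le c_{p,q}\, \mathbb{E}[X^p (\ln X)^{q+p/2}\, \mathbf 1\{X>1\}]$. -/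
/-!
Only the levels `k` with `2 ^ (k + 1) / √(k + 1) < x` contribute at a point `x`. Since
`√n ≤ 2 ^ (n / 2)`, such a level satisfies `2 ^ ((k + 1) / 2) < x`, so `1 < x` and
`k + 1 ≤ 2 log x / log 2`. For `p ≥ 1`, `q ≥ 0` the weights `2 ^ ((k + 1) p) (k + 1) ^ q` at least
double from one level to the next, so the contributing terms sum to at most twice the top one,
which is at most `x ^ p (k + 1) ^ (q + p / 2) ≤ (2 / log 2) ^ (q + p / 2) x ^ p (log x) ^ (q + p / 2)`.
Integrating this pointwise bound gives the theorem.
-/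

open MeasureTheory Real

noncomputable section

def dyadicWeight (p q : ℝ) (k : ℕ) : ℝ := (2 : ℝ) ^ (((k : ℝ) + 1) * p) * ((k : ℝ) + 1) ^ q

def dyadicThreshold (k : ℕ) : ℝ := (2 : ℝ) ^ ((k : ℝ) + 1) / √((k : ℝ) + 1)

end

lemma sqrt_natCast_le_two_rpow_half (n : ℕ) : √(n : ℝ) ≤ 2 ^ ((n : ℝ) / 2) := by
  have hn : (n : ℝ) ≤ 2 ^ (n : ℝ) := by
    rw [rpow_natCast]
    exact_mod_cast n.lt_two_pow_self.le
  calc √(n : ℝ) ≤ √(2 ^ (n : ℝ)) := sqrt_le_sqrt hn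
    _ = 2 ^ ((n : ℝ) / 2) := by
      rw [sqrt_eq_rpow, ← rpow_mul zero_le_two]
      ring_nf

lemma sum_range_succ_le_two_mul_of_two_mul_le {f : ℕ → ℝ} (h0 : 0 ≤ f 0)
    (hf : ∀ k, 2 * f k ≤ f (k + 1)) (N : ℕ) :
    ∑ k ∈ Finset.range (N + 1), f k ≤ 2 * f N := by
  induction N with
  | zero =>
    rw [Finset.sum_range_one]
    linarith
  | succ N ih =>
    rw [Finset.sum_range_succ]
    linarith [hf N]

section DyadicLevels

variable {p q x : ℝ} {k : ℕ}

lemma dyadicWeight_nonneg (p q : ℝ) (k : ℕ) : 0 ≤ dyadicWeight p q k := by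
  unfold dyadicWeight
  positivity

lemma two_mul_dyadicWeight_le (hp : 1 ≤ p) (hq : 0 ≤ q) (k : ℕ) :
    2 * dyadicWeight p q k ≤ dyadicWeight p q (k + 1) := by
  have h2p : (2 : ℝ) ≤ 2 ^ p := by
    simpa using rpow_le_rpow_of_exponent_le one_le_two hp
  have hsplit : (2 : ℝ) ^ (((k : ℝ) + 1 + 1) * p) = 2 ^ p * 2 ^ (((k : ℝ) + 1) * p) := by
    rw [← rpow_add zero_lt_two]
    ring_nf
  have hmono : ((k : ℝ) + 1) ^ q ≤ ((k : ℝ) + 1 + 1) ^ q :=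
    rpow_le_rpow (by positivity) (by linarith) hq
  unfold dyadicWeight
  push_cast
  rw [hsplit, mul_assoc]
  gcongr

lemma two_rpow_half_lt_of_dyadicThreshold_lt (h : dyadicThreshold k < x) :
    (2 : ℝ) ^ (((k : ℝ) + 1) / 2) < x := by
  have hsqrt : √((k : ℝ) + 1) ≤ 2 ^ (((k : ℝ) + 1) / 2) := by
    exact_mod_cast sqrt_natCast_le_two_rpow_half (k + 1)
  have hsplit : (2 : ℝ) ^ ((k : ℝ) + 1) = 2 ^ (((k : ℝ) + 1) / 2) * 2 ^ (((k : ℝ) + 1) / 2) := by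
    rw [← rpow_add zero_lt_two]
    ring_nf
  refine lt_of_le_of_lt ?_ h
  rw [dyadicThreshold, le_div_iff₀ (by positivity), hsplit]
  gcongr

lemma one_lt_of_dyadicThreshold_lt (h : dyadicThreshold k < x) : 1 < x :=
  (one_lt_rpow one_lt_two (by positivity)).trans (two_rpow_half_lt_of_dyadicThreshold_lt h)

lemma succ_le_of_dyadicThreshold_lt (h : dyadicThreshold k < x) :
    (k : ℝ) + 1 ≤ 2 / log 2 * log x := by
  have hlt := log_lt_log (by positivity) (two_rpow_half_lt_of_dyadicThreshold_lt h)
  rw [log_rpow zero_lt_two] at hlt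
  rw [div_mul_eq_mul_div, le_div_iff₀ (log_pos one_lt_two)]
  linarith

lemma two_rpow_mul_le_of_dyadicThreshold_lt (hp : 0 ≤ p) (h : dyadicThreshold k < x) :
    (2 : ℝ) ^ (((k : ℝ) + 1) * p) ≤ x ^ p * ((k : ℝ) + 1) ^ (p / 2) := by
  have hx : 0 ≤ x := (one_lt_of_dyadicThreshold_lt h).le.trans' zero_le_one
  have hlt : (2 : ℝ) ^ ((k : ℝ) + 1) < x * √((k : ℝ) + 1) :=
    (div_lt_iff₀ (by positivity)).1 h
  calc (2 : ℝ) ^ (((k : ℝ) + 1) * p) = ((2 : ℝ) ^ ((k : ℝ) + 1)) ^ p := rpow_mul zero_le_two _ _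
    _ ≤ (x * √((k : ℝ) + 1)) ^ p := rpow_le_rpow (by positivity) hlt.le hp
    _ = x ^ p * ((k : ℝ) + 1) ^ (p / 2) := by
      rw [mul_rpow hx (sqrt_nonneg _), sqrt_eq_rpow, ← rpow_mul (by positivity)]
      ring_nf

lemma dyadicWeight_le_of_dyadicThreshold_lt (hp : 0 ≤ p) (hq : 0 ≤ q)
    (h : dyadicThreshold k < x) :
    dyadicWeight p q k ≤ (2 / log 2) ^ (q + p / 2) * (x ^ p * log x ^ (q + p / 2)) := by
  have hlog2 := log_pos one_lt_two
  have hx := one_lt_of_dyadicThreshold_lt h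
  have hlogx := log_pos hx
  calc dyadicWeight p q k ≤ x ^ p * ((k : ℝ) + 1) ^ (p / 2) * ((k : ℝ) + 1) ^ q := by
        unfold dyadicWeight
        exact mul_le_mul_of_nonneg_right (two_rpow_mul_le_of_dyadicThreshold_lt hp h)
          (by positivity)
    _ = x ^ p * ((k : ℝ) + 1) ^ (q + p / 2) := by
        rw [mul_assoc, ← rpow_add (by positivity), add_comm (p / 2)]
    _ ≤ x ^ p * (2 / log 2 * log x) ^ (q + p / 2) := by
        have := succ_le_of_dyadicThreshold_lt h
        gcongr
    _ = (2 / log 2) ^ (q + p / 2) * (x ^ p * log x ^ (q + p / 2)) := by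
        rw [mul_rpow (by positivity) hlogx.le]
        ring

lemma tsum_ite_dyadicThreshold_lt_le (hp : 1 ≤ p) (hq : 0 ≤ q) (x : ℝ) :
    ∑' k, (if dyadicThreshold k < x then ENNReal.ofReal (dyadicWeight p q k) else 0)
      ≤ ENNReal.ofReal (2 * (2 / log 2) ^ (q + p / 2)) *
        ENNReal.ofReal (if 1 < x then x ^ p * log x ^ (q + p / 2) else 0) := by
  set S : Set ℕ := {k | dyadicThreshold k < x}
  rcases S.eq_empty_or_nonempty with hS | hS
  · have hnone : ∀ k, ¬dyadicThreshold k < x := Set.eq_empty_iff_forall_notMem.1 hS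
    simp [hnone]
  have hbdd : BddAbove S := by
    refine ⟨⌈2 / log 2 * log x⌉₊, fun k hk => ?_⟩
    have := succ_le_of_dyadicThreshold_lt hk
    exact Nat.cast_le.1 (by linarith [Nat.le_ceil (2 / log 2 * log x)] :
      (k : ℝ) ≤ ⌈2 / log 2 * log x⌉₊)
  set N := sSup S
  have hN : dyadicThreshold N < x := Nat.sSup_mem hS hbdd
  calc ∑' k, (if dyadicThreshold k < x then ENNReal.ofReal (dyadicWeight p q k) else 0)
      = ∑ k ∈ Finset.range (N + 1),
          (if dyadicThreshold k < x then ENNReal.ofReal (dyadicWeight p q k) else 0) :=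
        tsum_eq_sum fun k hk => if_neg fun hkx =>
          hk (Finset.mem_range_succ_iff.2 (le_csSup hbdd hkx))
    _ ≤ ∑ k ∈ Finset.range (N + 1), ENNReal.ofReal (dyadicWeight p q k) :=
        Finset.sum_le_sum fun k _ => by split_ifs <;> simp
    _ = ENNReal.ofReal (∑ k ∈ Finset.range (N + 1), dyadicWeight p q k) :=
        (ENNReal.ofReal_sum_of_nonneg fun k _ => dyadicWeight_nonneg p q k).symm
    _ ≤ ENNReal.ofReal (2 * dyadicWeight p q N) :=
        ENNReal.ofReal_le_ofReal <| sum_range_succ_le_two_mul_of_two_mul_le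
          (dyadicWeight_nonneg p q 0) (two_mul_dyadicWeight_le hp hq) N
    _ ≤ _ := by
        rw [if_pos (one_lt_of_dyadicThreshold_lt hN), ← ENNReal.ofReal_mul (by positivity),
          mul_assoc]
        gcongr
        exact dyadicWeight_le_of_dyadicThreshold_lt (by linarith) hq hN

end DyadicLevels

lemma tsum_mul_measure_eq_lintegral_tsum_indicator {ι Ω : Type*} [Countable ι]
    [MeasurableSpace Ω] (μ : Measure Ω) {s : ι → Set Ω} (hs : ∀ i, MeasurableSet (s i))
    (c : ι → ENNReal) :
    ∑' i, c i * μ (s i) = ∫⁻ ω, ∑' i, (s i).indicator (fun _ => c i) ω ∂μ := by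
  rw [lintegral_tsum fun i => (measurable_const.indicator (hs i)).aemeasurable]
  simp only [lintegral_indicator_const (hs _)]

theorem stmt3 (p q : ℝ) (hp : 1 ≤ p) (hq : 0 ≤ q) :
    ∃ c > (0 : ℝ),
      ∀ (Ω : Type) [MeasurableSpace Ω] (μ : Measure Ω) [IsProbabilityMeasure μ]
        (X : Ω → ℝ), Measurable X → (∀ ω, 0 ≤ X ω) →
        ∑' k : ℕ, ENNReal.ofReal ((2 : ℝ) ^ (((k : ℝ) + 1) * p) * ((k : ℝ) + 1) ^ q) *
            μ {ω | (2 : ℝ) ^ ((k : ℝ) + 1) / Real.sqrt ((k : ℝ) + 1) < X ω}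
          ≤ ENNReal.ofReal c *
            ∫⁻ ω, ENNReal.ofReal
              (if 1 < X ω then X ω ^ p * Real.log (X ω) ^ (q + p / 2) else 0) ∂μ := by
  have hlog2 := log_pos one_lt_two
  refine ⟨2 * (2 / log 2) ^ (q + p / 2), by positivity, fun Ω _ μ _ X hX _ => ?_⟩
  rw [tsum_mul_measure_eq_lintegral_tsum_indicator μ fun k => measurableSet_lt measurable_const hX,
    ← lintegral_const_mul' _ _ ENNReal.ofReal_ne_top]
  refine lintegral_mono fun ω => ?_
  simp only [Set.indicator_apply, Set.mem_ofPred_eq]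
  exact tsum_ite_dyadicThreshold_lt_le hp hq (X ω)
end

section
/- Let $(d_j)_{j\ge 1}$ be a sequence of square-integrable martingale differences with respect to a filtration $(\mathcal F_j)_{j\ge 0}$. Then for all positive real numbers $x$ and $y$, $\mathbb{P}\big(\{|\sum_{j=1}^n d_j| > x\} \cap \{\sum_{j=1}^n (d_j^2 + \mathbb{E}[d_j^2\mid\mathcal F_{j-1}]) \le y\}\big) \le 2\exp(-x^2/(2y))$. -/
/-!
For `l ≥ 0`, the elementary inequality `exp (u - u²/2) ≤ 1 + u + u²/2` at `u = l dⱼ`, together with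
`E[dⱼ | ℱⱼ₋₁] = 0`, gives `E[exp (l dⱼ - l² dⱼ²/2) | ℱⱼ₋₁] ≤ 1 + l² qⱼ/2 ≤ exp (l² qⱼ/2)` with
`qⱼ = E[dⱼ² | ℱⱼ₋₁]`. Hence `Wₖ = exp (l Sₖ - l²/2 ∑ⱼ≤ₖ (dⱼ² + qⱼ))` is a supermartingale with
`E[Wₙ] ≤ 1`; it is bounded (each summand is at most `1/2`), so no exponential moments are needed.
On the event in question `Wₙ ≥ exp (l x - l² y/2)`, and Markov's inequality with `l = x / y` bounds
the upper tail by `exp (-x²/(2y))`. The same bound for `-d` gives the factor `2`.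
-/

open MeasureTheory Finset

namespace Real

lemma hasDerivAt_quadratic_mul_exp (u : ℝ) :
    HasDerivAt (fun v : ℝ => (1 + v + v ^ 2 / 2) * exp (v ^ 2 / 2 - v))
      (u * (1 + u / 2 + u ^ 2 / 2) * exp (u ^ 2 / 2 - u)) u := by
  have hp : HasDerivAt (fun v : ℝ => 1 + v + v ^ 2 / 2) (1 + u) u :=
    (((hasDerivAt_id u).const_add 1).add ((hasDerivAt_pow 2 u).div_const 2)).congr_deriv
      (by simp)
  have hq : HasDerivAt (fun v : ℝ => v ^ 2 / 2 - v) (u - 1) u :=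
    (((hasDerivAt_pow 2 u).div_const 2).sub (hasDerivAt_id u)).congr_deriv (by simp)
  exact (hp.mul hq.exp).congr_deriv (by ring)

lemma one_le_quadratic_mul_exp (u : ℝ) : 1 ≤ (1 + u + u ^ 2 / 2) * exp (u ^ 2 / 2 - u) := by
  set g : ℝ → ℝ := fun v => (1 + v + v ^ 2 / 2) * exp (v ^ 2 / 2 - v)
  have hg : ∀ v, HasDerivAt g (v * (1 + v / 2 + v ^ 2 / 2) * exp (v ^ 2 / 2 - v)) v :=
    hasDerivAt_quadratic_mul_exp
  have hcont : ∀ s, ContinuousOn g s := fun s v _ => (hg v).continuousAt.continuousWithinAt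
  have hdiff : ∀ s, DifferentiableOn ℝ g s := fun s v _ =>
    (hg v).differentiableAt.differentiableWithinAt
  have hfactor : ∀ v : ℝ, 0 < (1 + v / 2 + v ^ 2 / 2) * exp (v ^ 2 / 2 - v) := fun v =>
    mul_pos (by nlinarith [sq_nonneg (v + 1), sq_nonneg v]) (exp_pos _)
  have hg0 : g 0 = 1 := by simp [g]
  rcases le_total 0 u with hu | hu
  · have : MonotoneOn g (Set.Ici 0) :=
      monotoneOn_of_deriv_nonneg (convex_Ici 0) (hcont _) (hdiff _) fun v hv => by
        rw [(hg v).deriv, mul_assoc]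
        exact mul_nonneg (le_of_lt (by simpa using hv)) (hfactor v).le
    simpa [hg0] using this Set.self_mem_Ici hu hu
  · have : AntitoneOn g (Set.Iic 0) :=
      antitoneOn_of_deriv_nonpos (convex_Iic 0) (hcont _) (hdiff _) fun v hv => by
        rw [(hg v).deriv, mul_assoc]
        exact mul_nonpos_of_nonpos_of_nonneg (le_of_lt (by simpa using hv)) (hfactor v).le
    simpa [hg0] using this hu Set.self_mem_Iic hu

lemma exp_sub_sq_half_le (u : ℝ) : exp (u - u ^ 2 / 2) ≤ 1 + u + u ^ 2 / 2 := by
  have h := mul_le_mul_of_nonneg_left (one_le_quadratic_mul_exp u) (exp_pos (u - u ^ 2 / 2)).le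
  rwa [mul_one, mul_left_comm, ← exp_add, show u - u ^ 2 / 2 + (u ^ 2 / 2 - u) = 0 by ring,
    exp_zero, mul_one] at h

end Real

lemma mul_sub_sq_half_le_half (l t : ℝ) : l * t - l ^ 2 / 2 * t ^ 2 ≤ 1 / 2 := by
  nlinarith [sq_nonneg (l * t - 1)]

open Real

section ConditionalStep

variable {Ω : Type*} {m m0 : MeasurableSpace Ω} {μ : Measure Ω} [IsFiniteMeasure μ]

lemma integrable_exp_mul_sub_sq {D : Ω → ℝ} (hD : AEStronglyMeasurable D μ) (l : ℝ) :
    Integrable (fun ω => exp (l * D ω - l ^ 2 / 2 * D ω ^ 2)) μ := by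
  refine (integrable_const (exp (1 / 2))).mono' (by fun_prop) (ae_of_all _ fun ω => ?_)
  rw [norm_of_nonneg (exp_pos _).le]
  exact exp_le_exp.2 (mul_sub_sq_half_le_half _ _)

lemma condExp_exp_mul_sub_sq_le (hm : m ≤ m0) {D : Ω → ℝ} (hD : MemLp D 2 μ)
    (hmart : μ[D | m] =ᵐ[μ] 0) (l : ℝ) :
    μ[fun ω => exp (l * D ω - l ^ 2 / 2 * D ω ^ 2) | m]
      ≤ᵐ[μ] fun ω => exp (l ^ 2 / 2 * μ[fun ω => D ω ^ 2 | m] ω) := by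
  set q := μ[fun ω => D ω ^ 2 | m]
  have hDint : Integrable D μ := hD.integrable one_le_two
  have hR_int : Integrable (fun ω => 1 + l * D ω + l ^ 2 / 2 * D ω ^ 2) μ :=
    ((integrable_const 1).add (hDint.const_mul l)).add (hD.integrable_sq.const_mul _)
  have hG_le_R : μ[fun ω => exp (l * D ω - l ^ 2 / 2 * D ω ^ 2) | m]
      ≤ᵐ[μ] μ[fun ω => 1 + l * D ω + l ^ 2 / 2 * D ω ^ 2 | m] :=
    condExp_mono (integrable_exp_mul_sub_sq hD.1 l) hR_int (ae_of_all _ fun ω => by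
      simpa only [mul_pow, mul_div_right_comm] using exp_sub_sq_half_le (l * D ω))
  have hR : μ[fun ω => 1 + l * D ω + l ^ 2 / 2 * D ω ^ 2 | m]
      =ᵐ[μ] fun ω => 1 + l ^ 2 / 2 * q ω := by
    change μ[(fun _ => (1 : ℝ)) + l • D + (l ^ 2 / 2) • fun ω => D ω ^ 2 | m] =ᵐ[μ] _
    filter_upwards [condExp_add ((integrable_const 1).add (hDint.smul l))
        (hD.integrable_sq.smul (l ^ 2 / 2)) m,
      condExp_add (integrable_const (1 : ℝ)) (hDint.smul l) m,
      condExp_smul l D m, condExp_smul (l ^ 2 / 2) (fun ω => D ω ^ 2) m, hmart]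
      with ω h₁ h₂ h₃ h₄ h₅
    simp only [Pi.add_apply, Pi.smul_apply, smul_eq_mul, Pi.zero_apply, condExp_const hm]
      at h₁ h₂ h₃ h₄ h₅ ⊢
    rw [h₁, h₂, h₃, h₄, h₅]
    ring
  filter_upwards [hG_le_R, hR] with ω h₁ h₂
  rw [h₂] at h₁
  linarith [add_one_le_exp (l ^ 2 / 2 * q ω)]

end ConditionalStep

section ExpSupermartingale

variable {Ω : Type*} [m0 : MeasurableSpace Ω] {μ : Measure Ω} {ℱ : ℕ → MeasurableSpace Ω}
  {d : ℕ → Ω → ℝ}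

noncomputable def expSupermartingale (μ : Measure Ω) (ℱ : ℕ → MeasurableSpace Ω)
    (d : ℕ → Ω → ℝ) (l : ℝ) (k : ℕ) (ω : Ω) : ℝ :=
  exp (l * ∑ j ∈ Icc 1 k, d j ω
    - l ^ 2 / 2 * ∑ j ∈ Icc 1 k, (d j ω ^ 2 + μ[fun ω' => d j ω' ^ 2 | ℱ (j - 1)] ω))

lemma expSupermartingale_zero (l : ℝ) : expSupermartingale μ ℱ d l 0 = 1 := by
  ext ω
  simp [expSupermartingale]

lemma expSupermartingale_succ (l : ℝ) (k : ℕ) (ω : Ω) :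
    expSupermartingale μ ℱ d l (k + 1) ω
      = expSupermartingale μ ℱ d l k ω
        * exp (-(l ^ 2 / 2 * μ[fun ω' => d (k + 1) ω' ^ 2 | ℱ k] ω))
        * exp (l * d (k + 1) ω - l ^ 2 / 2 * d (k + 1) ω ^ 2) := by
  simp only [expSupermartingale, sum_Icc_succ_top (Nat.le_add_left 1 k), ← exp_add,
    Nat.add_sub_cancel]
  ring_nf

lemma stronglyMeasurable_expSupermartingale (hmono : Monotone ℱ)
    (hmeas : ∀ j, 1 ≤ j → StronglyMeasurable[ℱ j] (d j)) (l : ℝ) (k : ℕ) :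
    StronglyMeasurable[ℱ k] (expSupermartingale μ ℱ d l k) := by
  have hd : ∀ j ∈ Icc 1 k, StronglyMeasurable[ℱ k] (d j) := fun j hj =>
    (hmeas j (mem_Icc.1 hj).1).mono (hmono (mem_Icc.1 hj).2)
  have hq : ∀ j ∈ Icc 1 k, StronglyMeasurable[ℱ k] μ[fun ω' => d j ω' ^ 2 | ℱ (j - 1)] :=
    fun j hj => stronglyMeasurable_condExp.mono (hmono (by grind))
  exact continuous_exp.comp_stronglyMeasurable
    (((stronglyMeasurable_fun_sum _ hd).const_mul l).sub ((stronglyMeasurable_fun_sum _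
      fun j hj => ((hd j hj).pow 2).add (hq j hj)).const_mul _))

lemma ae_expSupermartingale_le [IsFiniteMeasure μ] (l : ℝ) (k : ℕ) :
    ∀ᵐ ω ∂μ, expSupermartingale μ ℱ d l k ω ≤ exp (k / 2) := by
  filter_upwards [ae_all_iff.2 fun j => condExp_nonneg (m := ℱ (j - 1)) (μ := μ)
    (f := fun ω => d j ω ^ 2) (ae_of_all _ fun ω => sq_nonneg (d j ω))] with ω hq
  refine exp_le_exp.2 ?_
  calc l * ∑ j ∈ Icc 1 k, d j ω
        - l ^ 2 / 2 * ∑ j ∈ Icc 1 k, (d j ω ^ 2 + μ[fun ω' => d j ω' ^ 2 | ℱ (j - 1)] ω)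
      = ∑ j ∈ Icc 1 k, ((l * d j ω - l ^ 2 / 2 * d j ω ^ 2)
          - l ^ 2 / 2 * μ[fun ω' => d j ω' ^ 2 | ℱ (j - 1)] ω) := by
        simp only [mul_sum, ← sum_sub_distrib]
        exact sum_congr rfl fun j _ => by ring
    _ ≤ ∑ _j ∈ Icc 1 k, (1 / 2 : ℝ) := sum_le_sum fun j _ => by
        linarith [mul_sub_sq_half_le_half l (d j ω),
          mul_nonneg (by positivity : (0 : ℝ) ≤ l ^ 2 / 2) (hq j)]
    _ = k / 2 := by simp [div_eq_mul_one_div (k : ℝ)]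

lemma integrable_expSupermartingale [IsFiniteMeasure μ] (hle : ∀ j, ℱ j ≤ m0)
    (hmono : Monotone ℱ) (hmeas : ∀ j, 1 ≤ j → StronglyMeasurable[ℱ j] (d j)) (l : ℝ) (k : ℕ) :
    Integrable (expSupermartingale μ ℱ d l k) μ := by
  refine (integrable_const (exp (k / 2))).mono'
    ((stronglyMeasurable_expSupermartingale hmono hmeas l k).mono (hle k)).aestronglyMeasurable
    ?_
  filter_upwards [ae_expSupermartingale_le (ℱ := ℱ) (d := d) l k] with ω hω
  exact (norm_of_nonneg (exp_pos _).le).trans_le hω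

lemma condExp_expSupermartingale_succ_le [IsFiniteMeasure μ] (hle : ∀ j, ℱ j ≤ m0)
    (hmono : Monotone ℱ) (hmeas : ∀ j, 1 ≤ j → StronglyMeasurable[ℱ j] (d j))
    (hL2 : ∀ j, 1 ≤ j → MemLp (d j) 2 μ) (hmart : ∀ j, 1 ≤ j → μ[d j | ℱ (j - 1)] =ᵐ[μ] 0)
    (l : ℝ) (k : ℕ) :
    μ[expSupermartingale μ ℱ d l (k + 1) | ℱ k] ≤ᵐ[μ] expSupermartingale μ ℱ d l k := by
  set q := μ[fun ω' => d (k + 1) ω' ^ 2 | ℱ k]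
  set F : Ω → ℝ := fun ω => expSupermartingale μ ℱ d l k ω * exp (-(l ^ 2 / 2 * q ω))
  set G : Ω → ℝ := fun ω => exp (l * d (k + 1) ω - l ^ 2 / 2 * d (k + 1) ω ^ 2)
  have hk : 1 ≤ k + 1 := Nat.le_add_left 1 k
  have hW : expSupermartingale μ ℱ d l (k + 1) = F * G :=
    funext (expSupermartingale_succ l k)
  have hF : StronglyMeasurable[ℱ k] F :=
    (stronglyMeasurable_expSupermartingale hmono hmeas l k).mul
      (continuous_exp.comp_stronglyMeasurable (stronglyMeasurable_condExp.const_mul _).neg)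
  have hpull : μ[F * G | ℱ k] =ᵐ[μ] F * μ[G | ℱ k] :=
    condExp_mul_of_stronglyMeasurable_left hF
      (hW ▸ integrable_expSupermartingale hle hmono hmeas l _)
      (integrable_exp_mul_sub_sq (hL2 _ hk).1 l)
  have hG : μ[G | ℱ k] ≤ᵐ[μ] fun ω => exp (l ^ 2 / 2 * q ω) :=
    condExp_exp_mul_sub_sq_le (hle k) (hL2 _ hk) (by simpa using hmart _ hk) l
  filter_upwards [hpull, hG] with ω h₁ h₂
  rw [hW, h₁, Pi.mul_apply]
  calc F ω * μ[G | ℱ k] ω ≤ F ω * exp (l ^ 2 / 2 * q ω) :=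
        mul_le_mul_of_nonneg_left h₂ (mul_nonneg (exp_pos _).le (exp_pos _).le)
    _ = expSupermartingale μ ℱ d l k ω := by
        rw [mul_assoc, ← exp_add, neg_add_cancel, exp_zero, mul_one]

lemma integral_expSupermartingale_le_one [IsProbabilityMeasure μ] (hle : ∀ j, ℱ j ≤ m0)
    (hmono : Monotone ℱ) (hmeas : ∀ j, 1 ≤ j → StronglyMeasurable[ℱ j] (d j))
    (hL2 : ∀ j, 1 ≤ j → MemLp (d j) 2 μ) (hmart : ∀ j, 1 ≤ j → μ[d j | ℱ (j - 1)] =ᵐ[μ] 0)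
    (l : ℝ) (k : ℕ) :
    ∫ ω, expSupermartingale μ ℱ d l k ω ∂μ ≤ 1 := by
  induction k with
  | zero => simp [expSupermartingale_zero]
  | succ k ih =>
    calc ∫ ω, expSupermartingale μ ℱ d l (k + 1) ω ∂μ
        = ∫ ω, μ[expSupermartingale μ ℱ d l (k + 1) | ℱ k] ω ∂μ :=
          (integral_condExp (hle k)).symm
      _ ≤ ∫ ω, expSupermartingale μ ℱ d l k ω ∂μ :=
        integral_mono_ae integrable_condExp (integrable_expSupermartingale hle hmono hmeas l k)
          (condExp_expSupermartingale_succ_le hle hmono hmeas hL2 hmart l k)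
      _ ≤ 1 := ih

end ExpSupermartingale

section TailBound

variable {Ω : Type*} [m0 : MeasurableSpace Ω] {μ : Measure Ω} [IsProbabilityMeasure μ]
  {ℱ : ℕ → MeasurableSpace Ω} {d : ℕ → Ω → ℝ}

lemma measureReal_sum_gt_inter_le_exp_mul (hle : ∀ j, ℱ j ≤ m0) (hmono : Monotone ℱ)
    (hmeas : ∀ j, 1 ≤ j → StronglyMeasurable[ℱ j] (d j))
    (hL2 : ∀ j, 1 ≤ j → MemLp (d j) 2 μ) (hmart : ∀ j, 1 ≤ j → μ[d j | ℱ (j - 1)] =ᵐ[μ] 0)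
    (n : ℕ) (x y : ℝ) {l : ℝ} (hl : 0 ≤ l) :
    μ.real ({ω | x < ∑ j ∈ Icc 1 n, d j ω} ∩
        {ω | ∑ j ∈ Icc 1 n, ((d j ω) ^ 2 + (μ[fun ω' => (d j ω') ^ 2 | ℱ (j - 1)]) ω) ≤ y})
      ≤ exp (-(l * x - l ^ 2 / 2 * y)) := by
  set c := exp (l * x - l ^ 2 / 2 * y)
  have hsub : {ω | x < ∑ j ∈ Icc 1 n, d j ω} ∩
      {ω | ∑ j ∈ Icc 1 n, ((d j ω) ^ 2 + (μ[fun ω' => (d j ω') ^ 2 | ℱ (j - 1)]) ω) ≤ y}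
        ⊆ {ω | c ≤ expSupermartingale μ ℱ d l n ω} := by
    rintro ω ⟨hsum, hvar⟩
    exact exp_le_exp.2 (sub_le_sub (mul_le_mul_of_nonneg_left (le_of_lt hsum) hl)
      (mul_le_mul_of_nonneg_left hvar (by positivity)))
  have hmarkov : c * μ.real {ω | c ≤ expSupermartingale μ ℱ d l n ω} ≤ 1 :=
    (mul_meas_ge_le_integral_of_nonneg (ae_of_all _ fun ω => (exp_pos _).le)
      (integrable_expSupermartingale hle hmono hmeas l n) c).trans
      (integral_expSupermartingale_le_one hle hmono hmeas hL2 hmart l n)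
  calc _ ≤ μ.real {ω | c ≤ expSupermartingale μ ℱ d l n ω} := measureReal_mono hsub
    _ ≤ c⁻¹ * 1 := (le_inv_mul_iff₀ (exp_pos _)).2 hmarkov
    _ = c⁻¹ := mul_one _
    _ = exp (-(l * x - l ^ 2 / 2 * y)) := (exp_neg _).symm

lemma measureReal_sum_gt_inter_le (hle : ∀ j, ℱ j ≤ m0) (hmono : Monotone ℱ)
    (hmeas : ∀ j, 1 ≤ j → StronglyMeasurable[ℱ j] (d j))
    (hL2 : ∀ j, 1 ≤ j → MemLp (d j) 2 μ) (hmart : ∀ j, 1 ≤ j → μ[d j | ℱ (j - 1)] =ᵐ[μ] 0)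
    (n : ℕ) {x y : ℝ} (hx : 0 ≤ x) (hy : 0 < y) :
    μ.real ({ω | x < ∑ j ∈ Icc 1 n, d j ω} ∩
        {ω | ∑ j ∈ Icc 1 n, ((d j ω) ^ 2 + (μ[fun ω' => (d j ω') ^ 2 | ℱ (j - 1)]) ω) ≤ y})
      ≤ exp (-x ^ 2 / (2 * y)) := by
  convert measureReal_sum_gt_inter_le_exp_mul hle hmono hmeas hL2 hmart n x y
    (div_nonneg hx hy.le) using 2
  field_simp
  ring

end TailBound

theorem stmt5_general {Ω : Type*} [m0 : MeasurableSpace Ω] (μ : Measure Ω) [IsProbabilityMeasure μ]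
    (ℱ : ℕ → MeasurableSpace Ω) (hle : ∀ j, ℱ j ≤ m0) (hmono : Monotone ℱ)
    (d : ℕ → Ω → ℝ)
    (hmeas : ∀ j, 1 ≤ j → StronglyMeasurable[ℱ j] (d j))
    (hL2 : ∀ j, 1 ≤ j → MemLp (d j) 2 μ)
    (hmart : ∀ j, 1 ≤ j → μ[d j | ℱ (j - 1)] =ᵐ[μ] 0)
    (n : ℕ) (x y : ℝ) (hx : 0 < x) (hy : 0 < y) :
    (μ ({ω | x < |∑ j ∈ Finset.Icc 1 n, d j ω|} ∩
        {ω | ∑ j ∈ Finset.Icc 1 n,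
          ((d j ω) ^ 2 + (μ[fun ω' => (d j ω') ^ 2 | ℱ (j - 1)]) ω) ≤ y})).toReal
      ≤ 2 * Real.exp (-x ^ 2 / (2 * y)) := by
  set C := {ω | ∑ j ∈ Icc 1 n, ((d j ω) ^ 2 + (μ[fun ω' => (d j ω') ^ 2 | ℱ (j - 1)]) ω) ≤ y}
  have hupper := measureReal_sum_gt_inter_le hle hmono hmeas hL2 hmart n hx.le hy
  have hlower := measureReal_sum_gt_inter_le (d := fun j => -d j) hle hmono
    (fun j hj => (hmeas j hj).neg) (fun j hj => (hL2 j hj).neg)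
    (fun j hj => (condExp_neg _ _).trans (by simpa using (hmart j hj).neg)) n hx.le hy
  simp only [Pi.neg_apply, neg_sq, sum_neg_distrib] at hlower
  have hsub : {ω | x < |∑ j ∈ Icc 1 n, d j ω|} ∩ C
      ⊆ ({ω | x < ∑ j ∈ Icc 1 n, d j ω} ∩ C) ∪ ({ω | x < -∑ j ∈ Icc 1 n, d j ω} ∩ C) := by
    rintro ω ⟨habs, hC⟩
    rcases lt_abs.1 (show x < |∑ j ∈ Icc 1 n, d j ω| from habs) with h | h
    exacts [Or.inl ⟨h, hC⟩, Or.inr ⟨h, hC⟩]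
  calc μ.real ({ω | x < |∑ j ∈ Icc 1 n, d j ω|} ∩ C)
      ≤ μ.real ({ω | x < ∑ j ∈ Icc 1 n, d j ω} ∩ C)
        + μ.real ({ω | x < -∑ j ∈ Icc 1 n, d j ω} ∩ C) :=
        (measureReal_mono hsub).trans (measureReal_union_le _ _)
    _ ≤ 2 * exp (-x ^ 2 / (2 * y)) := by linarith

theorem stmt5 {Ω : Type*} [m0 : MeasurableSpace Ω] (μ : Measure Ω) [IsProbabilityMeasure μ]
    (ℱ : ℕ → MeasurableSpace Ω) (hle : ∀ j, ℱ j ≤ m0) (hmono : Monotone ℱ)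
    (d : ℕ → Ω → ℝ)
    (hmeas : ∀ j, 1 ≤ j → StronglyMeasurable[ℱ j] (d j))
    (hL2 : ∀ j, 1 ≤ j → MemLp (d j) 2 μ)
    (hmart : ∀ j, 1 ≤ j → μ[d j | ℱ (j - 1)] =ᵐ[μ] 0)
    (n : ℕ) (hn : 1 ≤ n) (x y : ℝ) (hx : 0 < x) (hy : 0 < y) :
    (μ ({ω | x < |∑ j ∈ Finset.Icc 1 n, d j ω|} ∩
        {ω | ∑ j ∈ Finset.Icc 1 n,
          ((d j ω) ^ 2 + (μ[fun ω' => (d j ω') ^ 2 | ℱ (j - 1)]) ω) ≤ y})).toReal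
      ≤ 2 * Real.exp (-x ^ 2 / (2 * y)) :=
  stmt5_general (m0 := m0) μ ℱ hle hmono d hmeas hL2 hmart n x y hx hy
end

section
/- Let $r\ge 0$. There exists a constant $c_r$ depending only on $r$ such that for every non-negative random variable $X$, $\|X^{1/2}\|_{2,r} \le c_r\, \|X\|_{1,r}^{1/2}$, where $\|\cdot\|_{p,r}$ denotes the Orlicz norm associated to $\varphi_{p,r}(x)=x^p(1+\log(1+x))^r$. -/
/-!
Put `c = (1 + log 2) ^ (r / 2)`. Pointwise `φ_{2,r}(√u / c) ≤ φ_{1,r}(u)`: the factor `c⁻²` in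
front absorbs the logarithm, because `√u / c ≤ 1 + u` gives
`1 + log (1 + √u / c) ≤ (1 + log 2)(1 + log (1 + u))`.
Hence `λ ↦ c √λ` maps the admissible scales of `X` into those of `√X`, and since it is monotone and
continuous, the infima satisfy `‖√X‖_{2,r} ≤ c ‖X‖_{1,r}^{1/2}`.

As `sInf ∅ = 0`, the degenerate case where `X` has no admissible scale needs the reverse map
`λ ↦ 2^r λ²`, which sends admissible scales of `√X` to those of `X`.
-/

open MeasureTheory

/-- Orlicz (Luxemburg) norm associated to `φ_{p,r}(x) = x^p (1 + log(1+x))^r`. -/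
noncomputable def orliczNorm {Ω : Type*} [MeasurableSpace Ω] (μ : Measure Ω)
    (p r : ℝ) (X : Ω → ℝ) : ℝ :=
  sInf {l : ℝ | 0 < l ∧
    ∫⁻ ω, ENNReal.ofReal
      ((|X ω| / l) ^ p * (1 + Real.log (1 + |X ω| / l)) ^ r) ∂μ ≤ 1}

noncomputable def orliczPhi (p r x : ℝ) : ℝ := x ^ p * (1 + Real.log (1 + x)) ^ r

def orliczScales {Ω : Type*} [MeasurableSpace Ω] (μ : Measure Ω) (p r : ℝ) (X : Ω → ℝ) :
    Set ℝ :=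
  {l | 0 < l ∧ ∫⁻ ω, ENNReal.ofReal (orliczPhi p r (|X ω| / l)) ∂μ ≤ 1}

section OrliczScales

variable {Ω : Type*} [MeasurableSpace Ω] {μ : Measure Ω}

lemma orliczNorm_eq_sInf_orliczScales (p r : ℝ) (X : Ω → ℝ) :
    orliczNorm μ p r X = sInf (orliczScales μ p r X) := rfl

lemma bddBelow_orliczScales (p r : ℝ) (X : Ω → ℝ) : BddBelow (orliczScales μ p r X) :=
  ⟨0, fun _ hl => hl.1.le⟩

lemma mem_orliczScales_of_le {p q r s l l' : ℝ} {X Y : Ω → ℝ} (hl' : 0 < l')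
    (hφ : ∀ ω, orliczPhi q s (|Y ω| / l') ≤ orliczPhi p r (|X ω| / l))
    (hl : l ∈ orliczScales μ p r X) : l' ∈ orliczScales μ q s Y :=
  ⟨hl', (lintegral_mono fun ω => ENNReal.ofReal_le_ofReal (hφ ω)).trans hl.2⟩

end OrliczScales

lemma csInf_le_of_mapsTo {f : ℝ → ℝ} {S T : Set ℝ} (hf : Monotone f) (hfc : Continuous f)
    (hS : S.Nonempty) (hSb : BddBelow S) (hTb : BddBelow T) (hST : Set.MapsTo f S T) :
    sInf T ≤ f (sInf S) := by
  rw [hf.map_csInf_of_continuousAt hfc.continuousAt hS hSb]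
  exact csInf_le_csInf hTb (hS.image f) hST.image_subset

lemma one_add_log_one_add_nonneg {x : ℝ} (hx : 0 ≤ x) : 0 ≤ 1 + Real.log (1 + x) := by
  linarith [Real.log_nonneg (le_add_of_nonneg_right hx)]

lemma one_add_log_one_add_le_mul {t u : ℝ} (ht : 0 ≤ t) (hu : 0 ≤ u) (htu : t ≤ 1 + u) :
    1 + Real.log (1 + t) ≤ (1 + Real.log 2) * (1 + Real.log (1 + u)) := by
  have hlog : Real.log (1 + t) ≤ Real.log 2 + Real.log (1 + u) := by
    rw [← Real.log_mul two_ne_zero (by positivity)]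
    exact Real.log_le_log (by positivity) (by linarith)
  have hlog2 : 0 ≤ Real.log 2 := Real.log_nonneg one_le_two
  have hlogu : 0 ≤ Real.log (1 + u) := Real.log_nonneg (by linarith)
  nlinarith [mul_nonneg hlog2 hlogu]

lemma orliczPhi_two_sqrt_div_le {r u : ℝ} (hr : 0 ≤ r) (hu : 0 ≤ u) :
    orliczPhi 2 r (√u / (1 + Real.log 2) ^ (r / 2)) ≤ orliczPhi 1 r u := by
  have hlog2 : 0 ≤ Real.log 2 := Real.log_nonneg one_le_two
  set c := (1 + Real.log 2) ^ (r / 2)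
  have hc : 1 ≤ c := Real.one_le_rpow (by linarith) (by linarith)
  have hcc : c ^ 2 = (1 + Real.log 2) ^ r := by
    rw [← Real.rpow_natCast, ← Real.rpow_mul (by linarith)]
    norm_num
  have ht : √u / c ≤ 1 + u :=
    (div_le_self (Real.sqrt_nonneg u) hc).trans
      (by nlinarith [Real.sq_sqrt hu, sq_nonneg (√u - 1)])
  have hlog : (1 + Real.log (1 + √u / c)) ^ r
      ≤ (1 + Real.log 2) ^ r * (1 + Real.log (1 + u)) ^ r := by
    rw [← Real.mul_rpow (by linarith) (one_add_log_one_add_nonneg hu)]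
    exact Real.rpow_le_rpow (one_add_log_one_add_nonneg (by positivity))
      (one_add_log_one_add_le_mul (by positivity) hu ht) hr
  calc orliczPhi 2 r (√u / c) = u / c ^ 2 * (1 + Real.log (1 + √u / c)) ^ r := by
        rw [orliczPhi, Real.rpow_two, div_pow, Real.sq_sqrt hu]
    _ ≤ u / c ^ 2 * ((1 + Real.log 2) ^ r * (1 + Real.log (1 + u)) ^ r) := by gcongr
    _ = orliczPhi 1 r u := by
        rw [orliczPhi, Real.rpow_one, ← hcc]
        field_simp

lemma orliczPhi_one_sq_div_le {r t : ℝ} (hr : 0 ≤ r) (ht : 0 ≤ t) :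
    orliczPhi 1 r (t ^ 2 / 2 ^ r) ≤ orliczPhi 2 r t := by
  have h2r : 1 ≤ (2 : ℝ) ^ r := Real.one_le_rpow one_le_two hr
  have hsq : t ^ 2 / 2 ^ r ≤ t ^ 2 := div_le_self (sq_nonneg t) h2r
  have hlog : 1 + Real.log (1 + t ^ 2 / 2 ^ r) ≤ 2 * (1 + Real.log (1 + t)) := by
    have : Real.log (1 + t ^ 2 / 2 ^ r) ≤ Real.log ((1 + t) ^ 2) :=
      Real.log_le_log (by positivity) (by nlinarith)
    rw [Real.log_pow] at this
    have hlogt : 0 ≤ Real.log (1 + t) := Real.log_nonneg (by linarith)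
    push_cast at this
    linarith
  have hpow : (1 + Real.log (1 + t ^ 2 / 2 ^ r)) ^ r ≤ 2 ^ r * (1 + Real.log (1 + t)) ^ r := by
    rw [← Real.mul_rpow zero_le_two (one_add_log_one_add_nonneg ht)]
    exact Real.rpow_le_rpow (one_add_log_one_add_nonneg (by positivity)) hlog hr
  calc orliczPhi 1 r (t ^ 2 / 2 ^ r)
      ≤ t ^ 2 / 2 ^ r * (2 ^ r * (1 + Real.log (1 + t)) ^ r) := by
        rw [orliczPhi, Real.rpow_one]
        gcongr
    _ = orliczPhi 2 r t := by
        rw [orliczPhi, Real.rpow_two]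
        field_simp

section SqrtScales

variable {Ω : Type*} [MeasurableSpace Ω] {μ : Measure Ω} {r l : ℝ} {X : Ω → ℝ}

lemma mul_sqrt_mem_orliczScales_sqrt (hr : 0 ≤ r) (hX : ∀ ω, 0 ≤ X ω)
    (hl : l ∈ orliczScales μ 1 r X) :
    (1 + Real.log 2) ^ (r / 2) * √l ∈ orliczScales μ 2 r (fun ω => √(X ω)) := by
  have hl0 := hl.1
  refine mem_orliczScales_of_le (by positivity) (fun ω => ?_) hl
  rw [abs_of_nonneg (Real.sqrt_nonneg _), abs_of_nonneg (hX ω), mul_comm, ← div_div,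
    ← Real.sqrt_div (hX ω)]
  exact orliczPhi_two_sqrt_div_le hr (div_nonneg (hX ω) hl0.le)

lemma two_rpow_mul_sq_mem_orliczScales (hr : 0 ≤ r) (hX : ∀ ω, 0 ≤ X ω)
    (hl : l ∈ orliczScales μ 2 r (fun ω => √(X ω))) :
    2 ^ r * l ^ 2 ∈ orliczScales μ 1 r X := by
  have hl0 := hl.1
  refine mem_orliczScales_of_le (by positivity) (fun ω => ?_) hl
  have hsq : |X ω| / (2 ^ r * l ^ 2) = (|√(X ω)| / l) ^ 2 / 2 ^ r := by
    rw [abs_of_nonneg (Real.sqrt_nonneg _), abs_of_nonneg (hX ω), div_pow,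
      Real.sq_sqrt (hX ω), div_div, mul_comm]
  rw [hsq]
  exact orliczPhi_one_sq_div_le hr (by positivity)

end SqrtScales

theorem stmt7 (r : ℝ) (hr : 0 ≤ r) :
    ∃ c > (0 : ℝ),
      ∀ (Ω : Type) [MeasurableSpace Ω] (μ : Measure Ω) [IsProbabilityMeasure μ]
        (X : Ω → ℝ), Measurable X → (∀ ω, 0 ≤ X ω) →
        orliczNorm μ 2 r (fun ω => Real.sqrt (X ω)) ≤ c * (orliczNorm μ 1 r X) ^ ((1 : ℝ) / 2) := by
  refine ⟨(1 + Real.log 2) ^ (r / 2), by positivity, fun Ω _ μ _ X _ hX => ?_⟩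
  rw [orliczNorm_eq_sInf_orliczScales, orliczNorm_eq_sInf_orliczScales, ← Real.sqrt_eq_rpow]
  rcases (orliczScales μ 1 r X).eq_empty_or_nonempty with hS | hS
  · have hT : orliczScales μ 2 r (fun ω => √(X ω)) = ∅ :=
      Set.eq_empty_of_forall_notMem fun l hl => by
        simpa [hS] using two_rpow_mul_sq_mem_orliczScales hr hX hl
    simp [hS, hT]
  · exact csInf_le_of_mapsTo
      (fun _ _ h => mul_le_mul_of_nonneg_left (Real.sqrt_le_sqrt h) (by positivity))
      (continuous_const.mul Real.continuous_sqrt) hS (bddBelow_orliczScales ..)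
      (bddBelow_orliczScales ..) fun _ hl => mul_sqrt_mem_orliczScales_sqrt hr hX hl
end

section
/- Let $(a_{\mathbf n})_{\mathbf n\in\mathbb N^d}$ be positive numbers, nondecreasing for the coordinatewise order, with $c:=\sup_{\mathbf n}\max_{1\le i\le d} a_{\mathbf n + n_i\mathbf e_i}/a_{\mathbf n} < \infty$. Let $(m\circ T^{\mathbf i})_{\mathbf i\in\mathbb Z^d}$ be a strictly stationary orthomartingale difference random field with respect to a commuting filtration $(T^{-\mathbf i}\mathcal F_0)$. For $0\le i\le d$ let $M_i := \sup_{\mathbf n\in\mathbb N_i} |S_{\mathbf n}(m)|/a_{\mathbf n}$, where $\mathbb N_i$ is the set of $\mathbf n\succcurlyeq\mathbf 1$ whose coordinates $i+1,\dots,d$ are powers of $2$. Then for every $x>0$ and every $i\in\{1,\dots,d\}$, $\mathbb{P}\{M_i > x\} \le \int_1^{\infty} \mathbb{P}\{M_{i-1} > ux/(2c)\}\,\mathrm du$. -/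
open MeasureTheory

/-- Partial sums on rectangles: `S_n(m)(ω) = ∑_{0 ≼ i ≼ n-1} m(T^i ω)`. -/
noncomputable def Sn {Ω : Type*} (d : ℕ) (T : (Fin d → ℤ) → Ω → Ω) (m : Ω → ℝ)
    (n : Fin d → ℕ) (ω : Ω) : ℝ :=
  ∑ i ∈ Fintype.piFinset (fun q => Finset.range (n q)), m (T (fun q => (i q : ℤ)) ω)

/-- `ℕ_i`: the indices `n ≽ 1` in `ℕ^d` whose coordinates of index `> i`
(0-based: of index `≥ i`) are powers of `2`. -/
def dyadicSet (d i : ℕ) : Set (Fin d → ℕ) :=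
  {n | (∀ q, 1 ≤ n q) ∧ ∀ q : Fin d, i ≤ (q : ℕ) → ∃ k : ℕ, n q = 2 ^ k}

/-- The maximal function `M_i = sup_{n ∈ ℕ_i} |S_n(m)| / a_n`. -/
noncomputable def Mi {Ω : Type*} (d : ℕ) (T : (Fin d → ℤ) → Ω → Ω) (m : Ω → ℝ)
    (a : (Fin d → ℕ) → ℝ) (i : ℕ) (ω : Ω) : ENNReal :=
  ⨆ n : dyadicSet d i, ENNReal.ofReal (|Sn d T m (n : Fin d → ℕ) ω| / a (n : Fin d → ℕ))

/-! Let `q` be the `i`-th coordinate and `Z = M_{i-1}`. For `n ∈ ℕ_i`, raising `n_q` to the next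
power of `2` gives `n' ∈ ℕ_{i-1}` with `a_{n'} ≤ c a_n`. Let `𝒢_j` be generated by the `T^{-v} F_0`
with `v_q < j`. The terms of `S_{n'}` outside the box of `n` have `v_q ≥ n_q`, and the commuting
property reduces their conditional expectation given `𝒢_{n_q}` to the orthomartingale relation
`E[m | T_q F_0] = 0`, so `S_n = E[S_{n'} | 𝒢_{n_q}]` and `|S_n| / a_n ≤ c E[Z | 𝒢_{n_q}]`. Hence
`M_i ≤ c sup_j E[Z | 𝒢_j]`, and Doob's maximal inequality in the form
`b P(sup_j E[Z | 𝒢_j] > 2b) ≤ E (Z - b)⁺ = ∫_b^∞ P(Z > t) dt`, with `b = x / (2c)` and the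
substitution `t = u b`, gives the claim. -/

open Set Filter
open scoped ENNReal

section Tail

lemma lintegral_Ioi_one_comp_mul (g : ℝ → ℝ≥0∞) {b : ℝ} (hb : 0 < b) :
    ∫⁻ u in Ioi 1, g (u * b) = (ENNReal.ofReal b)⁻¹ * ∫⁻ t in Ioi b, g t := by
  let e := (Homeomorph.mulRight₀ b hb.ne').toMeasurableEquiv
  have hpre : e ⁻¹' Ioi b = Ioi 1 := by
    ext u
    simpa [e] using (one_lt_div hb).symm.trans (by rw [mul_div_cancel_right₀ _ hb.ne'])
  change ∫⁻ u in Ioi 1, g (e u) = _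
  rw [← hpre, ← lintegral_map_equiv, ← e.restrict_map, show ⇑e = (· * b) from rfl,
    Real.map_volume_mul_right hb.ne', Measure.restrict_smul, lintegral_smul_measure,
    abs_of_pos (inv_pos.2 hb), ENNReal.ofReal_inv_of_pos hb, smul_eq_mul]

lemma lintegral_Ioi_zero_comp_add (g : ℝ → ℝ≥0∞) (b : ℝ) :
    ∫⁻ u in Ioi 0, g (u + b) = ∫⁻ t in Ioi b, g t := by
  let e := (Homeomorph.addRight b).toMeasurableEquiv
  have hpre : e ⁻¹' Ioi b = Ioi 0 := by
    ext u
    simp [e]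
  change ∫⁻ u in Ioi 0, g (e u) = _
  rw [← hpre, ← lintegral_map_equiv, ← e.restrict_map]
  exact congrArg (fun ν => ∫⁻ t in Ioi b, g t ∂ν) (map_add_right_eq_self volume b)

variable {Ω : Type*} [MeasurableSpace Ω] {μ : Measure Ω}

lemma lintegral_Ioi_measure_lt_eq_lintegral_ofReal_sub {Z : Ω → ℝ} (hZ : Measurable Z) (b : ℝ) :
    ∫⁻ t in Ioi b, μ {ω | t < Z ω} = ∫⁻ ω, ENNReal.ofReal (Z ω - b) ∂μ := by
  have hlayer := lintegral_eq_lintegral_meas_lt μ (ae_of_all _ fun ω => le_max_right (Z ω - b) 0)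
    ((hZ.sub_const b).max measurable_const).aemeasurable
  simp only [ENNReal.ofReal_max, ENNReal.ofReal_zero, max_zero] at hlayer
  rw [hlayer, ← lintegral_Ioi_zero_comp_add]
  refine setLIntegral_congr_fun measurableSet_Ioi fun t ht => ?_
  congr 1
  ext ω
  simp only [mem_ofPred_eq, lt_max_iff, lt_sub_iff_add_lt, not_lt_of_gt (mem_Ioi.1 ht), or_false]

lemma lintegral_Ioi_measure_ofReal_lt_eq_lintegral {M : Ω → ℝ≥0∞} (hM : Measurable M)
    (hfin : ∀ᵐ ω ∂μ, M ω ≠ ∞) {b : ℝ} (hb : 0 ≤ b) :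
    ∫⁻ t in Ioi b, μ {ω | ENNReal.ofReal t < M ω} =
      ∫⁻ ω, ENNReal.ofReal ((M ω).toReal - b) ∂μ := by
  rw [← lintegral_Ioi_measure_lt_eq_lintegral_ofReal_sub hM.ennreal_toReal]
  refine setLIntegral_congr_fun measurableSet_Ioi fun t ht => measure_congr ?_
  filter_upwards [hfin] with ω hω
  exact propext (ENNReal.ofReal_lt_iff_lt_toReal (hb.trans (mem_Ioi.1 ht).le) hω)

lemma ae_ne_top_of_lintegral_Ioi_measure_ofReal_lt_ne_top {M : Ω → ℝ≥0∞} (b : ℝ)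
    (h : ∫⁻ t in Ioi b, μ {ω | ENNReal.ofReal t < M ω} ≠ ∞) : ∀ᵐ ω ∂μ, M ω ≠ ∞ := by
  refine ae_iff.2 (by_contra fun hpos => h (top_le_iff.1 ?_))
  simp only [not_not] at hpos
  calc ∞ = ∫⁻ _ in Ioi b, μ {ω | M ω = ∞} := by
        rw [setLIntegral_const, Real.volume_Ioi, ENNReal.mul_top hpos]
    _ ≤ _ := lintegral_mono fun t => measure_mono fun ω (hω : M ω = ∞) => by
        simp [hω]

lemma integrable_toReal_of_lintegral_Ioi_measure_ofReal_lt_ne_top [IsFiniteMeasure μ]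
    {M : Ω → ℝ≥0∞} (hM : Measurable M) {b : ℝ} (hb : 0 ≤ b)
    (h : ∫⁻ t in Ioi b, μ {ω | ENNReal.ofReal t < M ω} ≠ ∞) :
    Integrable (fun ω => (M ω).toReal) μ := by
  have hfin := ae_ne_top_of_lintegral_Ioi_measure_ofReal_lt_ne_top b h
  rw [lintegral_Ioi_measure_ofReal_lt_eq_lintegral hM hfin hb] at h
  refine ⟨hM.ennreal_toReal.aestronglyMeasurable,
    (hasFiniteIntegral_iff_ofReal (ae_of_all _ fun ω => ENNReal.toReal_nonneg)).2 ?_⟩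
  calc ∫⁻ ω, ENNReal.ofReal (M ω).toReal ∂μ
      ≤ ∫⁻ ω, (ENNReal.ofReal ((M ω).toReal - b) + ENNReal.ofReal b) ∂μ :=
        lintegral_mono fun ω => by
          simpa using ENNReal.ofReal_add_le (p := (M ω).toReal - b) (q := b)
    _ < ∞ := by
        rw [lintegral_add_right _ measurable_const, lintegral_const]
        exact ENNReal.add_lt_top.2 ⟨h.lt_top, ENNReal.mul_lt_top ENNReal.ofReal_lt_top
          (measure_lt_top μ univ)⟩

end Tail

section Doob

variable {Ω : Type*} [m0 : MeasurableSpace Ω] {μ : Measure Ω} [IsFiniteMeasure μ]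
  {ℱ : Filtration ℕ m0} {Z : Ω → ℝ}

-- Doob's inequality at level `2b`, together with `∫_C Z ≤ E (Z - b)⁺ + b μ C`.
lemma ofReal_mul_measure_le_partialSup_condExp_le (hZint : Integrable Z μ) (hZ0 : 0 ≤ᵐ[μ] Z)
    {b : ℝ} (hb : 0 < b) (J : ℕ) :
    ENNReal.ofReal b * μ {ω | 2 * b ≤ (Finset.range (J + 1)).sup' Finset.nonempty_range_add_one
      fun k => max (μ[Z | ℱ k] ω) 0} ≤ ∫⁻ ω, ENNReal.ofReal (Z ω - b) ∂μ := by
  set G : ℕ → Ω → ℝ := fun k => μ[Z | ℱ k]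
  set C := {ω | 2 * b ≤ (Finset.range (J + 1)).sup' Finset.nonempty_range_add_one
      fun k => (G⁺) k ω}
  have hC : MeasurableSet[ℱ J] C := by
    refine measurableSet_le measurable_const
      (@Finset.measurable_range_sup'' ℝ _ Ω (ℱ J) _ _ (G⁺) J fun k hk => ?_)
    exact (stronglyMeasurable_condExp.mono (ℱ.mono hk)).measurable.max measurable_const
  have hdoob := maximal_ineq (martingale_condExp Z ℱ μ).submartingale.pos
    (fun k ω => posPart_nonneg (G k ω)) J (ε := (2 * b).toNNReal)
  rw [Real.coe_toNNReal _ (by positivity)] at hdoob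
  have hGJ : ∫ ω in C, (G⁺) J ω ∂μ = ∫ ω in C, Z ω ∂μ := by
    rw [← setIntegral_condExp (ℱ.le J) hZint hC]
    refine setIntegral_congr_ae (ℱ.le J _ hC) ?_
    filter_upwards [condExp_nonneg (m := ℱ J) hZ0] with ω hω _
    exact posPart_eq_self.2 hω
  have hZC : ENNReal.ofReal (∫ ω in C, Z ω ∂μ) ≤
      ∫⁻ ω, ENNReal.ofReal (Z ω - b) ∂μ + ENNReal.ofReal b * μ C := by
    rw [ofReal_integral_eq_lintegral_ofReal hZint.integrableOn (ae_restrict_of_ae hZ0)]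
    calc ∫⁻ ω in C, ENNReal.ofReal (Z ω) ∂μ
        ≤ ∫⁻ ω in C, (ENNReal.ofReal (Z ω - b) + ENNReal.ofReal b) ∂μ :=
          lintegral_mono fun ω => by simpa using ENNReal.ofReal_add_le (p := Z ω - b) (q := b)
      _ ≤ _ := by
          rw [lintegral_add_right _ measurable_const, setLIntegral_const, mul_comm]
          gcongr
          exact Measure.restrict_le_self
  have h2b : ((2 * b).toNNReal : ℝ≥0∞) = ENNReal.ofReal b + ENNReal.ofReal b := by
    rw [← ENNReal.ofReal_add hb.le hb.le, two_mul]
    rfl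
  rw [hGJ, h2b, add_mul] at hdoob
  exact (ENNReal.add_le_add_iff_right (ENNReal.mul_ne_top ENNReal.ofReal_ne_top
    (measure_ne_top μ C))).1 (hdoob.trans hZC)

lemma measure_exists_lt_condExp_le (hZint : Integrable Z μ) (hZ0 : 0 ≤ᵐ[μ] Z) {b : ℝ}
    (hb : 0 < b) :
    μ {ω | ∃ j, 2 * b < μ[Z | ℱ j] ω} ≤
      (ENNReal.ofReal b)⁻¹ * ∫⁻ ω, ENNReal.ofReal (Z ω - b) ∂μ := by
  set C : ℕ → Set Ω := fun J => {ω | 2 * b ≤ (Finset.range (J + 1)).sup'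
    Finset.nonempty_range_add_one fun k => max (μ[Z | ℱ k] ω) 0}
  have hC : Monotone C := fun J J' hJ ω (hω : 2 * b ≤ _) => hω.trans
    (Finset.sup'_mono _ (Finset.range_subset_range.2 (by omega)) _)
  have hsub : {ω | ∃ j, 2 * b < μ[Z | ℱ j] ω} ⊆ ⋃ J, C J := fun ω ⟨j, hj⟩ => mem_iUnion.2
    ⟨j, hj.le.trans ((le_max_left _ _).trans (Finset.le_sup'
      (fun k => max (μ[Z | ℱ k] ω) 0) (Finset.self_mem_range_succ j)))⟩
  refine (measure_mono hsub).trans ?_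
  rw [hC.measure_iUnion]
  refine iSup_le fun J => ?_
  rw [← ENNReal.mul_le_iff_le_inv (by simpa using hb) ENNReal.ofReal_ne_top]
  exact ofReal_mul_measure_le_partialSup_condExp_le hZint hZ0 hb J

end Doob

section CondExp

lemma MeasureTheory.MeasurePreserving.condExp_comp {Ω Ω' : Type*} {𝒜 : MeasurableSpace Ω'}
    [m0 : MeasurableSpace Ω] [m0' : MeasurableSpace Ω'] {μ : Measure Ω} {ν : Measure Ω'}
    [IsFiniteMeasure ν] {S : Ω → Ω'} (hS : MeasurePreserving S μ ν)
    (hSemb : MeasurableEmbedding S) (h𝒜 : 𝒜 ≤ m0') {g : Ω' → ℝ} (hg : Integrable g ν) :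
    μ[g ∘ S | 𝒜.comap S] =ᵐ[μ] ν[g | 𝒜] ∘ S := by
  have : IsFiniteMeasure μ := ⟨by
    rw [← preimage_univ (f := S), hS.measure_preimage MeasurableSet.univ.nullMeasurableSet]
    exact measure_lt_top ν _⟩
  refine (ae_eq_condExp_of_forall_setIntegral_eq
    ((MeasurableSpace.comap_mono h𝒜).trans hS.measurable.comap_le)
    (hS.integrable_comp_of_integrable hg) (fun s _ _ => ?_) ?_ ?_).symm
  · exact (hS.integrable_comp_of_integrable integrable_condExp).integrableOn
  · rintro - ⟨t, ht, rfl⟩ _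
    change ∫ x in S ⁻¹' t, ν[g | 𝒜] (S x) ∂μ = ∫ x in S ⁻¹' t, g (S x) ∂μ
    rw [hS.setIntegral_preimage_emb hSemb, hS.setIntegral_preimage_emb hSemb,
      setIntegral_condExp h𝒜 hg ht]
  · exact (stronglyMeasurable_condExp.comp_measurable
      (measurable_iff_comap_le.mpr le_rfl)).aestronglyMeasurable

lemma condExp_iSup_eq_zero {Ω : Type*} [m0 : MeasurableSpace Ω] {μ : Measure Ω}
    [IsFiniteMeasure μ] (𝒦 : Filtration ℕ m0) {Y : Ω → ℝ} (h : ∀ k, μ[Y | 𝒦 k] =ᵐ[μ] 0) :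
    μ[Y | ⨆ k, 𝒦 k] =ᵐ[μ] 0 := by
  filter_upwards [tendsto_ae_condExp (ℱ := 𝒦) Y, ae_all_iff.2 h] with ω hlim hzero
  exact tendsto_nhds_unique (hlim.congr fun k => hzero k) tendsto_const_nhds

end CondExp

section Shift

variable {G Ω : Type*} {F0 : MeasurableSpace Ω} {T : G → Ω → Ω}

lemma comap_shift_le [m0 : MeasurableSpace Ω] (hTmeas : ∀ v, Measurable (T v)) (hF0 : F0 ≤ m0)
    (v : G) : F0.comap (T v) ≤ m0 :=
  (MeasurableSpace.comap_mono hF0).trans (hTmeas v).comap_le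

lemma measurableEmbedding_shift [AddGroup G] [MeasurableSpace Ω]
    (hTmeas : ∀ v, Measurable (T v)) (hTact : ∀ u v ω, T u (T v ω) = T (u + v) ω)
    (hT0 : ∀ ω, T 0 ω = ω) (v : G) : MeasurableEmbedding (T v) :=
  (MeasurableEquiv.mk ⟨T v, T (-v), fun ω => by rw [hTact, neg_add_cancel, hT0],
    fun ω => by rw [hTact, add_neg_cancel, hT0]⟩ (hTmeas v) (hTmeas (-v))).measurableEmbedding

lemma stronglyMeasurable_comp_shift [Preorder G] {m : Ω → ℝ}
    (hfilt : ∀ u v : G, u ≤ v → F0.comap (T u) ≤ F0.comap (T v))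
    (hmmeas : StronglyMeasurable[F0] m) {u v : G} (huv : u ≤ v) :
    StronglyMeasurable[F0.comap (T v)] (m ∘ T u) :=
  (hmmeas.comp_measurable (comap_measurable (T u))).mono (hfilt u v huv)

lemma comap_comap_shift [Add G] (hTact : ∀ u v ω, T u (T v ω) = T (u + v) ω) (u v : G) :
    (F0.comap (T u)).comap (T v) = F0.comap (T (u + v)) := by
  rw [MeasurableSpace.comap_comp]
  exact congrArg (MeasurableSpace.comap · F0) (funext (hTact u v))

end Shift

section PartialSums

variable {d : ℕ} {Ω : Type*} {T : (Fin d → ℤ) → Ω → Ω} {m : Ω → ℝ}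

lemma Sn_eq_sum (n : Fin d → ℕ) :
    Sn d T m n =
      ∑ p ∈ Fintype.piFinset (fun r => Finset.range (n r)), m ∘ T (fun r => (p r : ℤ)) := by
  ext ω
  simp [Sn, Finset.sum_apply]

lemma measurable_Sn [MeasurableSpace Ω] (hTmeas : ∀ v, Measurable (T v)) (hm : Measurable m)
    (n : Fin d → ℕ) : Measurable (Sn d T m n) :=
  Finset.measurable_sum _ fun _ _ => hm.comp (hTmeas _)

lemma integrable_Sn [MeasurableSpace Ω] {μ : Measure Ω}
    (hTpres : ∀ v, MeasurePreserving (T v) μ μ) (hmint : Integrable m μ) (n : Fin d → ℕ) :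
    Integrable (Sn d T m n) μ :=
  integrable_finsetSum _ fun _ _ => (hTpres _).integrable_comp_of_integrable hmint

lemma measurable_Mi [MeasurableSpace Ω] (hTmeas : ∀ v, Measurable (T v)) (hm : Measurable m)
    (a : (Fin d → ℕ) → ℝ) (i : ℕ) : Measurable (Mi d T m a i) :=
  Measurable.iSup fun n => ((measurable_Sn hTmeas hm n).abs.div_const _).ennreal_ofReal

lemma ofReal_div_le_Mi {a : (Fin d → ℕ) → ℝ} {i : ℕ} {n : Fin d → ℕ} (hn : n ∈ dyadicSet d i)
    (ω : Ω) : ENNReal.ofReal (|Sn d T m n ω| / a n) ≤ Mi d T m a i ω :=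
  le_iSup (fun n : dyadicSet d i => ENNReal.ofReal (|Sn d T m n ω| / a n)) ⟨n, hn⟩

end PartialSums

lemma le_of_mem_sdiff_piFinset_update {ι : Type*} [Fintype ι] [DecidableEq ι] {n p : ι → ℕ}
    {q : ι} {N : ℕ} (hp : p ∈ Fintype.piFinset (fun r => Finset.range (Function.update n q N r)) \
      Fintype.piFinset (fun r => Finset.range (n r))) : n q ≤ p q := by
  simp only [Finset.mem_sdiff, Fintype.mem_piFinset, Finset.mem_range] at hp
  by_contra hlt
  refine hp.2 fun r => ?_
  rcases eq_or_ne r q with rfl | hr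
  · exact not_le.1 hlt
  · simpa [Function.update_of_ne hr] using hp.1 r

lemma apply_update_two_mul_le {ι : Type*} [DecidableEq ι] {a : (ι → ℕ) → ℝ} (hamono : Monotone a)
    {c : ℝ} (hc : 0 ≤ c) (hca : ∀ n q, a (Function.update n q (2 * n q)) ≤ c * a n)
    {n : ι → ℕ} {q : ι} {k : ℕ} (hk : k ≤ n q) :
    a (Function.update n q (2 * k)) ≤ c * a n := by
  have h := hca (Function.update n q k) q
  rw [Function.update_self, Function.update_idem] at h
  exact h.trans (mul_le_mul_of_nonneg_left (hamono (update_le_self_iff.2 hk)) hc)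

lemma update_two_pow_mem_dyadicSet {d : ℕ} {q : Fin d} {n : Fin d → ℕ}
    (hn : n ∈ dyadicSet d (q + 1)) (k : ℕ) : Function.update n q (2 ^ k) ∈ dyadicSet d q := by
  refine ⟨fun r => ?_, fun r hr => ?_⟩
  · rcases eq_or_ne r q with rfl | hrq
    · simpa using Nat.one_le_two_pow
    · simpa [Function.update_of_ne hrq] using hn.1 r
  · rcases eq_or_ne r q with rfl | hrq
    · exact ⟨k, by simp⟩
    · rw [Function.update_of_ne hrq]
      exact hn.2 r (by have := Fin.val_ne_of_ne hrq; omega)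

/-- `T v` stands for `T^v` and `F0.comap (T v)` for the σ-algebra `T^{-v} F_0`. -/
structure IsOrthomartingaleDifferenceField {d : ℕ} {Ω : Type*} (F0 : MeasurableSpace Ω)
    [m0 : MeasurableSpace Ω] (μ : Measure Ω) (T : (Fin d → ℤ) → Ω → Ω) (m : Ω → ℝ) : Prop where
  measurable : ∀ v, Measurable (T v)
  measurePreserving : ∀ v, MeasurePreserving (T v) μ μ
  add : ∀ u v ω, T u (T v ω) = T (u + v) ω
  zero : ∀ ω, T 0 ω = ω
  le : F0 ≤ m0
  comap_mono : ∀ u v : Fin d → ℤ, u ≤ v → F0.comap (T u) ≤ F0.comap (T v)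
  commuting : ∀ Y : Ω → ℝ, Integrable Y μ → ∀ u v : Fin d → ℤ,
    μ[μ[Y | F0.comap (T u)] | F0.comap (T v)] =ᵐ[μ] μ[Y | F0.comap (T (u ⊓ v))]
  integrable : Integrable m μ
  stronglyMeasurable : StronglyMeasurable[F0] m
  condExp_eq_zero : ∀ q : Fin d, μ[m | F0.comap (T (-Pi.single q 1))] =ᵐ[μ] 0

namespace IsOrthomartingaleDifferenceField

variable {d : ℕ} {Ω : Type*} {F0 : MeasurableSpace Ω} [m0 : MeasurableSpace Ω] {μ : Measure Ω}
  {T : (Fin d → ℤ) → Ω → Ω} {m : Ω → ℝ}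

lemma integrable_comp_shift (hX : IsOrthomartingaleDifferenceField F0 μ T m) (u : Fin d → ℤ) :
    Integrable (m ∘ T u) μ :=
  (hX.measurePreserving u).integrable_comp_of_integrable hX.integrable

lemma condExp_comp_shift_sub_single_eq_zero [IsFiniteMeasure μ]
    (hX : IsOrthomartingaleDifferenceField F0 μ T m) (q : Fin d) (u : Fin d → ℤ) :
    μ[m ∘ T u | F0.comap (T (u - Pi.single q 1))] =ᵐ[μ] 0 := by
  have h := (hX.measurePreserving u).condExp_comp (measurableEmbedding_shift hX.measurable hX.add
    hX.zero u) (comap_shift_le hX.measurable hX.le (-Pi.single q 1)) hX.integrable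
  rw [comap_comap_shift hX.add, neg_add_eq_sub] at h
  exact h.trans ((hX.measurePreserving u).quasiMeasurePreserving.ae_eq_comp (hX.condExp_eq_zero q))

lemma condExp_comp_shift_eq_zero [IsFiniteMeasure μ]
    (hX : IsOrthomartingaleDifferenceField F0 μ T m) {q : Fin d} {u v : Fin d → ℤ}
    (huv : v q < u q) : μ[m ∘ T u | F0.comap (T v)] =ᵐ[μ] 0 := by
  have hinf : u ⊓ v ≤ u - Pi.single q 1 := by
    intro r
    rcases eq_or_ne r q with rfl | hr
    · simp only [Pi.inf_apply, Pi.sub_apply, Pi.single_eq_same]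
      omega
    · simp [Pi.single_eq_of_ne hr]
  -- conditioning on `T^{-v} F0` is conditioning on `T^{-(u ⊓ v)} F0 ≤ T^{-(u - e_q)} F0`
  have hcomm := hX.commuting (m ∘ T u) (hX.integrable_comp_shift u) u v
  rw [condExp_of_stronglyMeasurable (comap_shift_le hX.measurable hX.le u)
    (stronglyMeasurable_comp_shift hX.comap_mono hX.stronglyMeasurable le_rfl)
    (hX.integrable_comp_shift u)] at hcomm
  refine hcomm.trans ((condExp_condExp_of_le (hX.comap_mono _ _ hinf)
    (comap_shift_le hX.measurable hX.le _)).symm.trans ?_)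
  refine (condExp_congr_ae (hX.condExp_comp_shift_sub_single_eq_zero q u)).trans ?_
  rw [condExp_zero]

/-- The `j`-th σ-algebra is generated by the `T^{-v} F0` with `v q < j`; the other coordinates
of `v` are unrestricted. -/
def coordFiltration (hX : IsOrthomartingaleDifferenceField F0 μ T m) (q : Fin d) :
    Filtration ℕ m0 where
  seq j := ⨆ k : ℕ, F0.comap (T (Function.update (fun _ => (k : ℤ)) q ((j : ℤ) - 1)))
  mono' _ _ hj := iSup_mono fun _ => hX.comap_mono _ _ (update_le_update_iff'.2 (by omega))
  le' _ := iSup_le fun _ => comap_shift_le hX.measurable hX.le _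

lemma condExp_coordFiltration_eq_zero [IsFiniteMeasure μ]
    (hX : IsOrthomartingaleDifferenceField F0 μ T m) {q : Fin d} {u : Fin d → ℤ} {j : ℕ}
    (hj : (j : ℤ) ≤ u q) : μ[m ∘ T u | hX.coordFiltration q j] =ᵐ[μ] 0 :=
  condExp_iSup_eq_zero
    ⟨fun k => F0.comap (T (Function.update (fun _ => (k : ℤ)) q ((j : ℤ) - 1))),
      fun _ _ hk => hX.comap_mono _ _
        (update_le_update_iff.2 ⟨le_rfl, fun _ _ => by exact_mod_cast hk⟩),
      fun _ => comap_shift_le hX.measurable hX.le _⟩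
    fun _ => hX.condExp_comp_shift_eq_zero (q := q) (by simp only [Function.update_self]; omega)

lemma stronglyMeasurable_Sn_coordFiltration (hX : IsOrthomartingaleDifferenceField F0 μ T m)
    {q : Fin d} {n : Fin d → ℕ} {j : ℕ} (hj : n q ≤ j) :
    StronglyMeasurable[hX.coordFiltration q j] (Sn d T m n) := by
  rw [Sn_eq_sum]
  refine Finset.stronglyMeasurable_sum _ fun p hp => ?_
  have hpn : ∀ r, p r < n r := fun r => Finset.mem_range.1 (Fintype.mem_piFinset.1 hp r)
  have hle : (fun r => (p r : ℤ)) ≤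
      Function.update (fun _ => ((Finset.univ.sup n : ℕ) : ℤ)) q ((j : ℤ) - 1) := by
    refine le_update_iff.2 ⟨?_, fun r _ => ?_⟩
    · have := hpn q
      omega
    · have := (hpn r).trans_le (Finset.le_sup (Finset.mem_univ r))
      omega
  exact (stronglyMeasurable_comp_shift hX.comap_mono hX.stronglyMeasurable hle).mono
    (le_iSup_of_le _ le_rfl)

lemma condExp_Sn_update [IsFiniteMeasure μ] (hX : IsOrthomartingaleDifferenceField F0 μ T m)
    {q : Fin d} {n : Fin d → ℕ} {N : ℕ} (hN : n q ≤ N) :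
    μ[Sn d T m (Function.update n q N) | hX.coordFiltration q (n q)] =ᵐ[μ] Sn d T m n := by
  have hsub : Fintype.piFinset (fun r => Finset.range (n r)) ⊆
      Fintype.piFinset (fun r => Finset.range (Function.update n q N r)) :=
    Fintype.piFinset_subset _ _ fun r => Finset.range_subset_range.2 <| by
      rcases eq_or_ne r q with rfl | hr
      · simpa using hN
      · simp [Function.update_of_ne hr]
  have hSn := integrable_Sn hX.measurePreserving hX.integrable n
  rw [Sn_eq_sum, ← Finset.sum_sdiff hsub, ← Sn_eq_sum]
  refine (condExp_add (integrable_finsetSum' _ fun p _ => hX.integrable_comp_shift _) hSn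
    _).trans ?_
  rw [condExp_of_stronglyMeasurable (Filtration.le _ _)
    (hX.stronglyMeasurable_Sn_coordFiltration le_rfl) hSn]
  refine (((condExp_finsetSum (fun p _ => hX.integrable_comp_shift _) _).trans
    (eventuallyEq_sum fun p hp => hX.condExp_coordFiltration_eq_zero
      (by exact_mod_cast le_of_mem_sdiff_piFinset_update hp))).add EventuallyEq.rfl).trans ?_
  simp

lemma abs_Sn_le_condExp_of_update [IsFiniteMeasure μ]
    (hX : IsOrthomartingaleDifferenceField F0 μ T m) {q : Fin d} {Z : Ω → ℝ}
    (hZint : Integrable Z μ) {n : Fin d → ℕ} {N : ℕ} (hN : n q ≤ N) {A : ℝ}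
    (hbound : ∀ᵐ ω ∂μ, |Sn d T m (Function.update n q N) ω| ≤ A * Z ω) :
    ∀ᵐ ω ∂μ, |Sn d T m n ω| ≤ A * μ[Z | hX.coordFiltration q (n q)] ω := by
  have hint := integrable_Sn hX.measurePreserving hX.integrable (Function.update n q N)
  filter_upwards [hX.condExp_Sn_update hN,
    abs_condExp_ae_le_condExp_abs (μ := μ) (m := hX.coordFiltration q (n q))
      (Sn d T m (Function.update n q N)),
    condExp_mono (m := hX.coordFiltration q (n q)) hint.abs (hZint.smul A) hbound,
    condExp_smul (μ := μ) A Z (hX.coordFiltration q (n q))]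
    with ω hSn habs hmono hsmul
  rw [← hSn]
  exact habs.trans (hmono.trans_eq hsmul)

lemma abs_Sn_div_le_mul_condExp_Mi [IsFiniteMeasure μ]
    (hX : IsOrthomartingaleDifferenceField F0 μ T m) {q : Fin d} {a : (Fin d → ℕ) → ℝ}
    (hapos : ∀ n, 0 < a n) (hamono : Monotone a) {c : ℝ} (hc : 0 ≤ c)
    (hca : ∀ n q, a (Function.update n q (2 * n q)) ≤ c * a n)
    (hfin : ∀ᵐ ω ∂μ, Mi d T m a q ω ≠ ∞)
    (hMint : Integrable (fun ω => (Mi d T m a q ω).toReal) μ) :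
    ∀ᵐ ω ∂μ, ∀ n ∈ dyadicSet d (q + 1), |Sn d T m n ω| / a n ≤
      c * μ[fun ω => (Mi d T m a q ω).toReal | hX.coordFiltration q (n q)] ω := by
  rw [ae_ball_iff (Set.to_countable _)]
  intro n hn
  have hk : 2 ^ Nat.log2 (n q) ≤ n q := Nat.log2_self_le (by have := hn.1 q; omega)
  have hmem : Function.update n q (2 * 2 ^ Nat.log2 (n q)) ∈ dyadicSet d q := by
    rw [← pow_succ']
    exact update_two_pow_mem_dyadicSet hn _
  have hbound : ∀ᵐ ω ∂μ, |Sn d T m (Function.update n q (2 * 2 ^ Nat.log2 (n q))) ω| ≤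
      a (Function.update n q (2 * 2 ^ Nat.log2 (n q))) * (Mi d T m a q ω).toReal := by
    filter_upwards [hfin] with ω hω
    have h := ofReal_div_le_Mi (T := T) (m := m) (a := a) hmem ω
    rw [← ENNReal.ofReal_toReal hω, ENNReal.ofReal_le_ofReal_iff ENNReal.toReal_nonneg] at h
    exact (div_le_iff₀' (hapos _)).1 h
  filter_upwards [hX.abs_Sn_le_condExp_of_update hMint
      (by have := Nat.lt_log2_self (n := n q); rw [pow_succ'] at this; omega) hbound,
    condExp_nonneg (ae_of_all _ fun ω => ENNReal.toReal_nonneg)]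
    with ω hSn hnonneg
  rw [div_le_iff₀ (hapos n)]
  calc |Sn d T m n ω|
      ≤ a (Function.update n q (2 * 2 ^ Nat.log2 (n q))) * μ[_ | _] ω := hSn
    _ ≤ c * a n * μ[_ | _] ω :=
        mul_le_mul_of_nonneg_right (apply_update_two_mul_le hamono hc hca hk) hnonneg
    _ = _ := by ring

lemma measure_ofReal_lt_Mi_succ_le [IsFiniteMeasure μ]
    (hX : IsOrthomartingaleDifferenceField F0 μ T m) {q : Fin d} {a : (Fin d → ℕ) → ℝ}
    (hapos : ∀ n, 0 < a n) (hamono : Monotone a) {c : ℝ} (hc : 0 < c)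
    (hca : ∀ n q, a (Function.update n q (2 * n q)) ≤ c * a n)
    (hfin : ∀ᵐ ω ∂μ, Mi d T m a q ω ≠ ∞)
    (hMint : Integrable (fun ω => (Mi d T m a q ω).toReal) μ) (x : ℝ) :
    μ {ω | ENNReal.ofReal x < Mi d T m a (q + 1) ω} ≤
      μ {ω | ∃ j, x / c < μ[fun ω => (Mi d T m a q ω).toReal | hX.coordFiltration q j] ω} := by
  refine measure_mono_ae ?_
  filter_upwards [hX.abs_Sn_div_le_mul_condExp_Mi hapos hamono hc.le hca hfin hMint]
    with ω hω hlt
  obtain ⟨⟨n, hn⟩, hxn⟩ := lt_iSup_iff.1 hlt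
  exact ⟨n q, (div_lt_iff₀' hc).2 ((ENNReal.ofReal_lt_ofReal_iff'.1 hxn).1.trans_le (hω n hn))⟩

end IsOrthomartingaleDifferenceField

theorem stmt13_general (d : ℕ)
    {Ω : Type*} [m0 : MeasurableSpace Ω] (μ : Measure Ω) [IsProbabilityMeasure μ]
    (T : (Fin d → ℤ) → Ω → Ω)
    (hTmeas : ∀ i, Measurable (T i))
    (hTpres : ∀ i, MeasurePreserving (T i) μ μ)
    (hTact : ∀ i j ω, T i (T j ω) = T (i + j) ω) (hT0 : ∀ ω, T 0 ω = ω)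
    (F0 : MeasurableSpace Ω) (hF0 : F0 ≤ m0)
    -- `(T^{-i} F0)_i` is a filtration
    (hfilt : ∀ i j : Fin d → ℤ, i ≤ j →
      MeasurableSpace.comap (T i) F0 ≤ MeasurableSpace.comap (T j) F0)
    -- the filtration is commuting
    (hcomm : ∀ Y : Ω → ℝ, Integrable Y μ → ∀ i j : Fin d → ℤ,
      μ[ μ[Y | MeasurableSpace.comap (T i) F0] | MeasurableSpace.comap (T j) F0]
        =ᵐ[μ] μ[Y | MeasurableSpace.comap (T (i ⊓ j)) F0])
    (m : Ω → ℝ) (hmint : Integrable m μ) (hmmeas : StronglyMeasurable[F0] m)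
    -- orthomartingale differences: `E[m | T_q F0] = 0` for every `q`
    (hortho : ∀ q : Fin d,
      μ[m | MeasurableSpace.comap (T (-Pi.single q 1)) F0] =ᵐ[μ] 0)
    (a : (Fin d → ℕ) → ℝ) (hapos : ∀ n, 0 < a n)
    (hamono : ∀ n n' : Fin d → ℕ, n ≤ n' → a n ≤ a n')
    (c : ℝ) (hc : 0 < c)
    (hca : ∀ (n : Fin d → ℕ) (q : Fin d), a (Function.update n q (2 * n q)) ≤ c * a n)
    (i : ℕ) (hi1 : 1 ≤ i) (hid : i ≤ d) (x : ℝ) (hx : 0 < x) :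
    μ {ω | ENNReal.ofReal x < Mi d T m a i ω} ≤
      ∫⁻ u in Set.Ioi (1 : ℝ),
        μ {ω | ENNReal.ofReal (u * x / (2 * c)) < Mi d T m a (i - 1) ω} := by
  -- `F0` follows `m0` among the binders, so it would be the preferred instance.
  let := m0
  have hX : IsOrthomartingaleDifferenceField F0 μ T m :=
    ⟨hTmeas, hTpres, hTact, hT0, hF0, hfilt, hcomm, hmint, hmmeas, hortho⟩
  obtain ⟨q, rfl⟩ : ∃ q : Fin d, (q : ℕ) + 1 = i := ⟨⟨i - 1, by omega⟩, by simp; omega⟩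
  rw [Nat.add_sub_cancel]
  have hb : 0 < x / (2 * c) := by positivity
  have hM : Measurable (Mi d T m a q) := measurable_Mi hTmeas (hmmeas.mono hF0).measurable a q
  simp_rw [mul_div_assoc]
  rw [lintegral_Ioi_one_comp_mul (fun t => μ {ω | ENNReal.ofReal t < Mi d T m a q ω}) hb]
  by_cases htop : ∫⁻ t in Ioi (x / (2 * c)), μ {ω | ENNReal.ofReal t < Mi d T m a q ω} = ∞
  · simp [htop]
  have hfin := ae_ne_top_of_lintegral_Ioi_measure_ofReal_lt_ne_top _ htop
  have hMint := integrable_toReal_of_lintegral_Ioi_measure_ofReal_lt_ne_top hM hb.le htop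
  rw [lintegral_Ioi_measure_ofReal_lt_eq_lintegral hM hfin hb.le]
  calc μ {ω | ENNReal.ofReal x < Mi d T m a (q + 1) ω}
      ≤ μ {ω | ∃ j, 2 * (x / (2 * c)) <
          μ[fun ω => (Mi d T m a q ω).toReal | hX.coordFiltration q j] ω} := by
        rw [show 2 * (x / (2 * c)) = x / c by field_simp]
        exact hX.measure_ofReal_lt_Mi_succ_le hapos hamono hc hca hfin hMint x
    _ ≤ _ := measure_exists_lt_condExp_le hMint (ae_of_all _ fun _ => ENNReal.toReal_nonneg) hb

theorem stmt13 (d : ℕ) (hd : 1 ≤ d)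
    {Ω : Type*} [m0 : MeasurableSpace Ω] (μ : Measure Ω) [IsProbabilityMeasure μ]
    (T : (Fin d → ℤ) → Ω → Ω)
    (hTmeas : ∀ i, Measurable (T i))
    (hTpres : ∀ i, MeasurePreserving (T i) μ μ)
    (hTact : ∀ i j ω, T i (T j ω) = T (i + j) ω) (hT0 : ∀ ω, T 0 ω = ω)
    (F0 : MeasurableSpace Ω) (hF0 : F0 ≤ m0)
    -- `(T^{-i} F0)_i` is a filtration
    (hfilt : ∀ i j : Fin d → ℤ, i ≤ j →
      MeasurableSpace.comap (T i) F0 ≤ MeasurableSpace.comap (T j) F0)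
    -- the filtration is commuting
    (hcomm : ∀ Y : Ω → ℝ, Integrable Y μ → ∀ i j : Fin d → ℤ,
      μ[ μ[Y | MeasurableSpace.comap (T i) F0] | MeasurableSpace.comap (T j) F0]
        =ᵐ[μ] μ[Y | MeasurableSpace.comap (T (i ⊓ j)) F0])
    (m : Ω → ℝ) (hmint : Integrable m μ) (hmmeas : StronglyMeasurable[F0] m)
    -- orthomartingale differences: `E[m | T_q F0] = 0` for every `q`
    (hortho : ∀ q : Fin d,
      μ[m | MeasurableSpace.comap (T (-Pi.single q 1)) F0] =ᵐ[μ] 0)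
    (a : (Fin d → ℕ) → ℝ) (hapos : ∀ n, 0 < a n)
    (hamono : ∀ n n' : Fin d → ℕ, n ≤ n' → a n ≤ a n')
    (c : ℝ) (hc : 0 < c)
    (hca : ∀ (n : Fin d → ℕ) (q : Fin d), a (Function.update n q (2 * n q)) ≤ c * a n)
    (i : ℕ) (hi1 : 1 ≤ i) (hid : i ≤ d) (x : ℝ) (hx : 0 < x) :
    μ {ω | ENNReal.ofReal x < Mi d T m a i ω} ≤
      ∫⁻ u in Set.Ioi (1 : ℝ),
        μ {ω | ENNReal.ofReal (u * x / (2 * c)) < Mi d T m a (i - 1) ω} :=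
  stmt13_general d (m0 := m0) μ T hTmeas hTpres hTact hT0 F0 hF0 hfilt hcomm m hmint hmmeas hortho a
    hapos hamono c hc hca i hi1 hid x hx
end

section
/- Let $(V_n)_{n\ge 1}$ be a subadditive sequence of non-negative reals (i.e., $V_{m+n}\le V_m+V_n$). Then there is a universal constant $C$ such that $\sum_{k\ge 0} 2^{-k/2} V_{2^k} \le C \sum_{n\ge 1} n^{-3/2} V_n$. -/
/-!
Summing `V N ≤ V m + V (N - m)` over `1 ≤ m < N` gives `N V_N ≤ 2 ∑_{m ≤ N} V_m`. For `N = 2^k` this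
bounds `2^{-k/2} V_{2^k}` by `2 ∑_{m ≤ 2^k} 2^{-3k/2} V_m`. After exchanging the sums over `k` and `m`,
the coefficient of `V_m` is a geometric series over the `k` with `m ≤ 2^k`, at most twice its first term,
hence at most `2 m^{-3/2}`; so `C = 4` works. In `ℝ≥0∞` the exchange of sums needs no summability, and
truncating `V` by `ENNReal.ofReal` preserves subadditivity.
-/

open Finset ENNReal

section Subadditive

variable {M : Type*} [AddCommMonoid M] [PartialOrder M] {V : ℕ → M}

theorem nsmul_succ_le_two_nsmul_sum_of_subadditive [IsOrderedAddMonoid M]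
    (hV : ∀ m n, 1 ≤ m → 1 ≤ n → V (m + n) ≤ V m + V n) (N : ℕ) :
    N • V (N + 1) ≤ 2 • ∑ n ∈ range N, V (n + 1) := by
  have hpair : ∀ n ∈ range N, V (N + 1) ≤ V (n + 1) + V (N - 1 - n + 1) := by
    intro n hn
    have hnN := mem_range.mp hn
    convert hV (n + 1) (N - 1 - n + 1) (by omega) (by omega) using 2
    omega
  calc N • V (N + 1) = ∑ n ∈ range N, V (N + 1) := by rw [sum_const, card_range]
    _ ≤ ∑ n ∈ range N, (V (n + 1) + V (N - 1 - n + 1)) := sum_le_sum hpair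
    _ = 2 • ∑ n ∈ range N, V (n + 1) := by
      rw [sum_add_distrib, sum_range_reflect (fun n ↦ V (n + 1)), two_nsmul]

theorem nsmul_le_two_nsmul_sum_of_subadditive [CanonicallyOrderedAdd M] [IsOrderedAddMonoid M]
    (hV : ∀ m n, 1 ≤ m → 1 ≤ n → V (m + n) ≤ V m + V n) (N : ℕ) :
    N • V N ≤ 2 • ∑ n ∈ range N, V (n + 1) := by
  cases N with
  | zero => simp
  | succ N =>
    rw [succ_nsmul, sum_range_succ, nsmul_add]
    exact add_le_add (nsmul_succ_le_two_nsmul_sum_of_subadditive hV N)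
      (two_nsmul (V (N + 1)) ▸ le_add_self)

end Subadditive

theorem tsum_ite_le_pow_two_rpow_neg_le (m : ℕ) {p : ℝ} (hp : 1 ≤ p) :
    ∑' k : ℕ, (if m ≤ 2 ^ k then ((2 : ℝ≥0∞) ^ k) ^ (-p) else 0) ≤ 2 * (m : ℝ≥0∞) ^ (-p) := by
  set k₀ := Nat.clog 2 m
  have hk₀ : ∀ k, m ≤ 2 ^ k ↔ k₀ ≤ k := fun k ↦ (Nat.clog_le_iff_le_pow one_lt_two).symm
  have hhead : ∑ k ∈ range k₀, (if m ≤ 2 ^ k then ((2 : ℝ≥0∞) ^ k) ^ (-p) else 0) = 0 :=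
    sum_eq_zero fun k hk ↦ if_neg fun h ↦ (mem_range.mp hk).not_ge ((hk₀ k).mp h)
  have hbase : ((2 : ℝ≥0∞) ^ k₀) ^ (-p) ≤ (m : ℝ≥0∞) ^ (-p) := by
    have hm : (m : ℝ≥0∞) ≤ 2 ^ k₀ := by exact_mod_cast Nat.le_pow_clog one_lt_two m
    rw [rpow_neg, rpow_neg]
    exact ENNReal.inv_le_inv.mpr (rpow_le_rpow hm (by linarith))
  have hstep : ∀ j : ℕ, ((2 : ℝ≥0∞) ^ j) ^ (-p) ≤ 2⁻¹ ^ j := fun j ↦ by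
    calc ((2 : ℝ≥0∞) ^ j) ^ (-p) ≤ ((2 : ℝ≥0∞) ^ j) ^ (-1 : ℝ) :=
          rpow_le_rpow_of_exponent_le (one_le_pow₀ one_le_two) (by linarith)
      _ = 2⁻¹ ^ j := by rw [rpow_neg_one, ENNReal.inv_pow]
  rw [← ENNReal.summable.sum_add_tsum_nat_add' (k := k₀), hhead, zero_add]
  calc ∑' j, (if m ≤ 2 ^ (j + k₀) then ((2 : ℝ≥0∞) ^ (j + k₀)) ^ (-p) else 0)
      = ∑' j : ℕ, ((2 : ℝ≥0∞) ^ j) ^ (-p) * ((2 : ℝ≥0∞) ^ k₀) ^ (-p) := by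
        refine tsum_congr fun j ↦ ?_
        rw [if_pos ((hk₀ _).mpr (Nat.le_add_left _ _)), pow_add,
          mul_rpow_of_ne_zero (by simp) (by simp)]
    _ ≤ ∑' j : ℕ, 2⁻¹ ^ j * (m : ℝ≥0∞) ^ (-p) :=
        ENNReal.tsum_le_tsum fun j ↦ mul_le_mul' (hstep j) hbase
    _ = 2 * (m : ℝ≥0∞) ^ (-p) := by
        rw [ENNReal.tsum_mul_right, tsum_geometric, one_sub_inv_two, inv_inv]

theorem two_rpow_neg_div_two (k : ℕ) :
    (2 : ℝ≥0∞) ^ (-(k : ℝ) / 2) = ((2 : ℝ≥0∞) ^ k) ^ (-(3 / 2 : ℝ)) * 2 ^ k := by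
  rw [← rpow_natCast, ← rpow_mul, ← rpow_add _ _ two_ne_zero ofNat_ne_top]
  ring_nf

theorem tsum_two_rpow_neg_div_two_mul_le_of_subadditive {v : ℕ → ℝ≥0∞}
    (hv : ∀ m n, 1 ≤ m → 1 ≤ n → v (m + n) ≤ v m + v n) :
    ∑' k : ℕ, (2 : ℝ≥0∞) ^ (-(k : ℝ) / 2) * v (2 ^ k) ≤
      4 * ∑' n : ℕ, ((n : ℝ≥0∞) + 1) ^ (-(3 / 2 : ℝ)) * v (n + 1) := by
  set w : ℕ → ℕ → ℝ≥0∞ := fun k n ↦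
    if n + 1 ≤ 2 ^ k then ((2 : ℝ≥0∞) ^ k) ^ (-(3 / 2 : ℝ)) else 0
  have hrow : ∀ k : ℕ, (2 : ℝ≥0∞) ^ (-(k : ℝ) / 2) * v (2 ^ k) ≤ 2 * ∑' n, w k n * v (n + 1) := by
    intro k
    have hsum : ∑ n ∈ range (2 ^ k), ((2 : ℝ≥0∞) ^ k) ^ (-(3 / 2 : ℝ)) * v (n + 1) ≤
        ∑' n, w k n * v (n + 1) := by
      refine le_of_eq_of_le (sum_congr rfl fun n hn ↦ ?_) (ENNReal.sum_le_tsum _)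
      simp only [w]
      rw [if_pos (Nat.add_one_le_of_lt (mem_range.mp hn))]
    calc (2 : ℝ≥0∞) ^ (-(k : ℝ) / 2) * v (2 ^ k)
        = ((2 : ℝ≥0∞) ^ k) ^ (-(3 / 2 : ℝ)) * (2 ^ k • v (2 ^ k)) := by
          rw [two_rpow_neg_div_two, nsmul_eq_mul, mul_assoc, Nat.cast_pow, Nat.cast_ofNat]
      _ ≤ ((2 : ℝ≥0∞) ^ k) ^ (-(3 / 2 : ℝ)) * (2 • ∑ n ∈ range (2 ^ k), v (n + 1)) :=
          mul_le_mul_right (nsmul_le_two_nsmul_sum_of_subadditive hv _) _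
      _ ≤ 2 * ∑' n, w k n * v (n + 1) := by
          rw [two_nsmul, ← two_mul, mul_left_comm, mul_sum]
          exact mul_le_mul_right hsum 2
  have hcol : ∀ n, ∑' k, w k n ≤ 2 * ((n : ℝ≥0∞) + 1) ^ (-(3 / 2 : ℝ)) := fun n ↦ by
    simp only [w]
    exact_mod_cast tsum_ite_le_pow_two_rpow_neg_le (n + 1) (p := 3 / 2) (by norm_num)
  calc ∑' k : ℕ, (2 : ℝ≥0∞) ^ (-(k : ℝ) / 2) * v (2 ^ k)
      ≤ ∑' k, 2 * ∑' n, w k n * v (n + 1) := ENNReal.tsum_le_tsum hrow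
    _ = 2 * ∑' n, (∑' k, w k n) * v (n + 1) := by
        rw [ENNReal.tsum_mul_left, ENNReal.tsum_comm]
        simp_rw [ENNReal.tsum_mul_right]
    _ ≤ 2 * ∑' n : ℕ, 2 * ((n : ℝ≥0∞) + 1) ^ (-(3 / 2 : ℝ)) * v (n + 1) :=
        mul_le_mul_right (ENNReal.tsum_le_tsum fun n ↦ mul_le_mul_left (hcol n) _) _
    _ = 4 * ∑' n : ℕ, ((n : ℝ≥0∞) + 1) ^ (-(3 / 2 : ℝ)) * v (n + 1) := by
        simp_rw [mul_assoc, ENNReal.tsum_mul_left, ← mul_assoc]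
        norm_num

theorem stmt17 :
    ∃ C > (0 : ℝ),
      ∀ V : ℕ → ℝ, (∀ n, 0 ≤ V n) →
        (∀ m n, 1 ≤ m → 1 ≤ n → V (m + n) ≤ V m + V n) →
        ∑' k : ℕ, ENNReal.ofReal ((2 : ℝ) ^ (-(k : ℝ) / 2) * V (2 ^ k)) ≤
          ENNReal.ofReal C *
            ∑' n : ℕ, ENNReal.ofReal (V (n + 1) / ((n : ℝ) + 1) ^ ((3 : ℝ) / 2)) := by
  refine ⟨4, by norm_num, fun V _ hV ↦ ?_⟩
  have hv : ∀ m n, 1 ≤ m → 1 ≤ n →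
      ENNReal.ofReal (V (m + n)) ≤ ENNReal.ofReal (V m) + ENNReal.ofReal (V n) :=
    fun m n hm hn ↦ (ofReal_le_ofReal (hV m n hm hn)).trans ofReal_add_le
  have hlhs : ∀ k : ℕ, ENNReal.ofReal ((2 : ℝ) ^ (-(k : ℝ) / 2) * V (2 ^ k)) =
      (2 : ℝ≥0∞) ^ (-(k : ℝ) / 2) * ENNReal.ofReal (V (2 ^ k)) := fun k ↦ by
    rw [ofReal_mul (by positivity), ← ofReal_rpow_of_pos two_pos, ofReal_ofNat]
  have hrhs : ∀ n : ℕ, ENNReal.ofReal (V (n + 1) / ((n : ℝ) + 1) ^ ((3 : ℝ) / 2)) =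
      ((n : ℝ≥0∞) + 1) ^ (-(3 / 2 : ℝ)) * ENNReal.ofReal (V (n + 1)) := fun n ↦ by
    rw [div_eq_inv_mul, ofReal_mul (by positivity), ← Real.rpow_neg (by positivity),
      ← ofReal_rpow_of_pos (by positivity), ofReal_add (by positivity) zero_le_one,
      ofReal_natCast, ofReal_one]
  simp_rw [hlhs, hrhs, ofReal_ofNat]
  exact tsum_two_rpow_neg_div_two_mul_le_of_subadditive hv
end
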